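/- arXiv:1612.02753 — 6 statements merged into one kernel-verified Lean document; each statement's English description precedes it below -/
import Mathlib

section
/- Let X, Y be linearly independent vectors in a finite-dimensional vector space V over a field, and let P₁, P₂ be symmetric k-vectors (elements of Sym^k V) with X ⊙ P₂ = Y ⊙ P₁ (symmetric product). Then there exists a symmetric (k-1)-vector S with P₁ = X ⊙ S and P₂ = Y ⊙ S. -/
/-!
A nonzero linear form is prime in the polynomial ring (a unique factorization domain), and it
does not divide a linear form independent of it. So `X ∣ Y * P₁` forces `P₁ = X * S`, and
cancelling `X` in `X * P₂ = Y * X * S` gives `P₂ = Y * S`. The cofactor `S` of a homogeneous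
polynomial is homogeneous because multiplication by a nonzero homogeneous polynomial shifts
homogeneous components injectively.
-/

open MvPolynomial

namespace MvPolynomial

variable {σ R K : Type*}

attribute [local instance] gradedAlgebra in
theorem homogeneousComponent_add_mul_of_isHomogeneous [CommSemiring R]
    {φ : MvPolynomial σ R} {m : ℕ} (hφ : φ.IsHomogeneous m) (ψ : MvPolynomial σ R) (j : ℕ) :
    homogeneousComponent (m + j) (φ * ψ) = φ * homogeneousComponent j ψ := by
  rw [← decomposition.decompose'_apply, ← decomposition.decompose'_apply]
  exact DirectSum.coe_decompose_mul_add_of_left_mem (𝒜 := homogeneousSubmodule σ R) (a_mem := hφ)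

theorem IsHomogeneous.of_mul_left [CommRing R] [IsDomain R] {φ ψ : MvPolynomial σ R} {m N : ℕ}
    (hφ : φ.IsHomogeneous m) (hφ0 : φ ≠ 0) (h : (φ * ψ).IsHomogeneous N) :
    ψ.IsHomogeneous (N - m) := by
  obtain rfl | hψ0 := eq_or_ne ψ 0
  · exact isHomogeneous_zero _ _ _
  have hN : N = m + ψ.totalDegree := by
    rw [← h.totalDegree (mul_ne_zero hφ0 hψ0), totalDegree_mul_of_isDomain hφ0 hψ0,
      hφ.totalDegree hφ0]
  have hψ : homogeneousComponent ψ.totalDegree ψ = ψ := by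
    apply mul_left_cancel₀ hφ0
    rw [← homogeneousComponent_add_mul_of_isHomogeneous hφ ψ, ← hN, homogeneousComponent_eq_self h]
  rw [hN, Nat.add_sub_cancel_left]
  simpa only [hψ] using homogeneousComponent_isHomogeneous ψ.totalDegree ψ

theorem IsHomogeneous.exists_C_mul_eq_of_dvd [CommRing R] [IsDomain R]
    {φ ψ : MvPolynomial σ R} {m : ℕ} (hφ : φ.IsHomogeneous m) (hψ : ψ.IsHomogeneous m)
    (hφ0 : φ ≠ 0) (h : φ ∣ ψ) : ∃ c : R, C c * φ = ψ := by
  obtain ⟨χ, rfl⟩ := h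
  have hχ : χ.IsHomogeneous 0 := by simpa using hφ.of_mul_left hφ0 hψ
  refine ⟨coeff 0 χ, ?_⟩
  rw [← totalDegree_eq_zero_iff_eq_C.mp (Nat.le_zero.mp hχ.totalDegree_le), mul_comm]

theorem prime_of_totalDegree_eq_one [Field K] {φ : MvPolynomial σ K} (hφ : φ.totalDegree = 1) :
    Prime φ := by
  refine (irreducible_of_totalDegree_eq_one hφ fun x hx => ?_).prime
  obtain ⟨d, hd⟩ := support_nonempty.mpr (by rintro rfl; simp at hφ : φ ≠ 0)
  exact (ne_zero_of_dvd_ne_zero (mem_support_iff.mp hd) (hx d)).isUnit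

end MvPolynomial

/-- `Sym V` is modelled as the polynomial algebra `K[ξ₁,…,ξ_n]`: `Sym^k V` is the space of
homogeneous polynomials of degree `k` and `⊙` is polynomial multiplication. -/
theorem stmt1_general {K : Type*} [Field K] {n k : ℕ}
    (X Y : MvPolynomial (Fin n) K)
    (hX : X.IsHomogeneous 1) (hY : Y.IsHomogeneous 1)
    (hXY : LinearIndependent K ![X, Y])
    (P₁ P₂ : MvPolynomial (Fin n) K)
    (hP₁ : P₁.IsHomogeneous k)
    (h : X * P₂ = Y * P₁) :
    ∃ S : MvPolynomial (Fin n) K, S.IsHomogeneous (k - 1) ∧ P₁ = X * S ∧ P₂ = Y * S := by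
  have hX0 : X ≠ 0 := hXY.ne_zero 0
  have hXY' := (LinearIndependent.pair_iff' hX0).mp hXY
  have hX_not_dvd_Y : ¬X ∣ Y := fun hdvd => by
    obtain ⟨c, hc⟩ := hX.exists_C_mul_eq_of_dvd hY hX0 hdvd
    exact hXY' c (by rw [smul_eq_C_mul, hc])
  obtain ⟨S, rfl⟩ := ((prime_of_totalDegree_eq_one (hX.totalDegree hX0)).dvd_or_dvd
    ⟨P₂, h.symm⟩).resolve_left hX_not_dvd_Y
  refine ⟨S, hX.of_mul_left hX0 hP₁, rfl, mul_left_cancel₀ hX0 ?_⟩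
  rw [h, mul_left_comm]

/-- Model `Sym V` for a finite-dimensional vector space `V` over a field of characteristic
zero as the polynomial algebra `K[ξ₁,…,ξ_n]`, so that `Sym^k V` is the space of homogeneous
polynomials of degree `k` and the symmetric product `⊙` is polynomial multiplication.
If `X`, `Y` are linearly independent vectors (homogeneous of degree 1) and `P₁`, `P₂` are
symmetric `k`-vectors with `X ⊙ P₂ = Y ⊙ P₁`, then there is a symmetric `(k-1)`-vector `S`
with `P₁ = X ⊙ S` and `P₂ = Y ⊙ S`. -/
theorem stmt1 {K : Type*} [Field K] [CharZero K] {n k : ℕ}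
    (X Y : MvPolynomial (Fin n) K)
    (hX : X.IsHomogeneous 1) (hY : Y.IsHomogeneous 1)
    (hXY : LinearIndependent K ![X, Y])
    (P₁ P₂ : MvPolynomial (Fin n) K)
    (hP₁ : P₁.IsHomogeneous k) (hP₂ : P₂.IsHomogeneous k)
    (h : X * P₂ = Y * P₁) :
    ∃ S : MvPolynomial (Fin n) K, S.IsHomogeneous (k - 1) ∧ P₁ = X * S ∧ P₂ = Y * S :=
  stmt1_general X Y hX hY hXY P₁ P₂ hP₁ h
end

section
/- For the Monge invariant I(α) = 9(α'')²α⁽⁵⁾ − 45 α'' α''' α⁽⁴⁾ + 40 (α''')³: if α(λ) satisfies a quadratic relation, i.e., there are constants a,b,c,d,e,f not all zero with a·α² + b·αλ + c·λ² + d·α + e·λ + f = 0 identically and α''(λ₀) ≠ 0, then I(α) vanishes identically near λ₀. (Verification in the model case: for α(λ) = λ², and more generally for α solving any nondegenerate conic relation such as α² + λ² = 1 with α > 0, one has I(α) = 0.) -/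
/-- Monge invariant: if a smooth function `α` satisfies a nontrivial quadratic (conic)
relation `a·α² + b·αλ + c·λ² + d·α + e·λ + f = 0` identically, and `α''(λ₀) ≠ 0`, then
the Monge invariant `I(α) = 9(α'')²α⁽⁵⁾ − 45 α'' α''' α⁽⁴⁾ + 40 (α''')³` vanishes
identically in a neighbourhood of `λ₀`. -/
theorem stmt9 (α : ℝ → ℝ) (hα : ContDiff ℝ (⊤ : ℕ∞) α) (a b c d e f : ℝ)
    (hne : ¬(a = 0 ∧ b = 0 ∧ c = 0 ∧ d = 0 ∧ e = 0 ∧ f = 0))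
    (hconic : ∀ l : ℝ, a * (α l) ^ 2 + b * (α l) * l + c * l ^ 2 + d * α l + e * l + f = 0)
    (l₀ : ℝ) (h2 : iteratedDeriv 2 α l₀ ≠ 0) :
    ∀ᶠ l in nhds l₀,
      9 * (iteratedDeriv 2 α l) ^ 2 * iteratedDeriv 5 α l
        - 45 * iteratedDeriv 2 α l * iteratedDeriv 3 α l * iteratedDeriv 4 α l
        + 40 * (iteratedDeriv 3 α l) ^ 3 = 0 := by
  have hA : ∀ (i : ℕ) (l : ℝ),
      HasDerivAt (iteratedDeriv i α) (iteratedDeriv (i + 1) α l) l := by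
    intro i l
    have h1 : Differentiable ℝ (iteratedDeriv i α) :=
      hα.differentiable_iteratedDeriv i (by exact_mod_cast WithTop.coe_lt_top _)
    rw [iteratedDeriv_succ]
    exact (h1 l).hasDerivAt
  set A : ℕ → ℝ → ℝ := fun i => iteratedDeriv i α with hAdef
  have hA0 : ∀ l, A 0 l = α l := by intro l; rw [hAdef]; simp [iteratedDeriv_zero]
  have hG0 : ∀ l : ℝ,
      a * (A 0 l) ^ 2 + b * (A 0 l) * l + c * l ^ 2 + d * A 0 l + e * l + f = 0 := by
    intro l; rw [hA0]; exact hconic l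
  have step : ∀ (g : ℝ → ℝ) (v l : ℝ), (∀ x, g x = 0) → HasDerivAt g v l → v = 0 := by
    intro g v l hg hder
    have hgz : g = fun _ => (0 : ℝ) := funext hg
    rw [hgz] at hder
    exact hder.unique (hasDerivAt_const l 0)
  have hG1 : ∀ l : ℝ,
      2 * a * (A 0 l * A 1 l) + b * (A 1 l * l + A 0 l) + 2 * c * l + d * A 1 l + e = 0 := by
    intro l
    refine step _ _ l hG0 ?_
    have H := (((((hA 0 l).pow 2).const_mul a).add
        (((hA 0 l).mul (hasDerivAt_id l)).const_mul b)).add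
        (((hasDerivAt_pow 2 l).const_mul c).add
        (((hA 0 l).const_mul d).add
        (((hasDerivAt_id l).const_mul e).add (hasDerivAt_const l f)))))
    convert H using 1 <;>
      first
        | (funext x; simp only [hAdef, id_eq, Pi.add_apply, Pi.mul_apply, Pi.pow_apply] <;> ring)
        | (simp only [hAdef, id_eq]; push_cast; ring)
        | rfl
  have hG2 : ∀ l : ℝ,
      2 * a * (A 1 l * A 1 l + A 0 l * A 2 l) + b * (A 2 l * l + 2 * A 1 l)
        + 2 * c + d * A 2 l = 0 := by
    intro l
    refine step _ _ l hG1 ?_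
    have H := ((((hA 0 l).mul (hA 1 l)).const_mul (2 * a)).add
        ((((hA 1 l).mul (hasDerivAt_id l)).add (hA 0 l)).const_mul b)).add
        ((((hasDerivAt_id l).const_mul (2 * c))).add
        (((hA 1 l).const_mul d).add (hasDerivAt_const l e)))
    convert H using 1 <;>
      first
        | (funext x; simp only [hAdef, id_eq, Pi.add_apply, Pi.mul_apply, Pi.pow_apply] <;> ring)
        | (simp only [hAdef, id_eq]; ring)
        | rfl
  have hG3 : ∀ l : ℝ,
      2 * a * (3 * (A 1 l * A 2 l) + A 0 l * A 3 l) + b * (A 3 l * l + 3 * A 2 l)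
        + d * A 3 l = 0 := by
    intro l
    refine step _ _ l hG2 ?_
    have H := (((((hA 1 l).mul (hA 1 l)).add ((hA 0 l).mul (hA 2 l))).const_mul (2 * a)).add
        ((((hA 2 l).mul (hasDerivAt_id l)).add ((hA 1 l).const_mul 2)).const_mul b)).add
        ((hasDerivAt_const l (2 * c)).add ((hA 2 l).const_mul d))
    convert H using 1 <;>
      first
        | (funext x; simp only [hAdef, id_eq, Pi.add_apply, Pi.mul_apply, Pi.pow_apply] <;> ring)
        | (simp only [hAdef, id_eq]; ring)
        | rfl
  have hG4 : ∀ l : ℝ,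
      2 * a * (3 * (A 2 l * A 2 l) + 4 * (A 1 l * A 3 l) + A 0 l * A 4 l)
        + b * (A 4 l * l + 4 * A 3 l) + d * A 4 l = 0 := by
    intro l
    refine step _ _ l hG3 ?_
    have H := ((((((hA 1 l).mul (hA 2 l)).const_mul 3).add
        ((hA 0 l).mul (hA 3 l))).const_mul (2 * a)).add
        ((((hA 3 l).mul (hasDerivAt_id l)).add ((hA 2 l).const_mul 3)).const_mul b)).add
        ((hA 3 l).const_mul d)
    convert H using 1 <;>
      first
        | (funext x; simp only [hAdef, id_eq, Pi.add_apply, Pi.mul_apply, Pi.pow_apply] <;> ring)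
        | (simp only [hAdef, id_eq]; ring)
        | rfl
  have hG5 : ∀ l : ℝ,
      2 * a * (10 * (A 2 l * A 3 l) + 5 * (A 1 l * A 4 l) + A 0 l * A 5 l)
        + b * (A 5 l * l + 5 * A 4 l) + d * A 5 l = 0 := by
    intro l
    refine step _ _ l hG4 ?_
    have H := (((((((hA 2 l).mul (hA 2 l)).const_mul 3).add
        (((hA 1 l).mul (hA 3 l)).const_mul 4)).add
        ((hA 0 l).mul (hA 4 l))).const_mul (2 * a)).add
        ((((hA 4 l).mul (hasDerivAt_id l)).add ((hA 3 l).const_mul 4)).const_mul b)).add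
        ((hA 4 l).const_mul d)
    convert H using 1 <;>
      first
        | (funext x; simp only [hAdef, id_eq, Pi.add_apply, Pi.mul_apply, Pi.pow_apply] <;> ring)
        | (simp only [hAdef, id_eq]; ring)
        | rfl
  have h2' : A 2 l₀ ≠ 0 := h2
  -- P(l₀) ≠ 0
  have hP0 : 2 * a * A 0 l₀ + b * l₀ + d ≠ 0 := by
    intro hP
    have hQ0 : 3 * A 2 l₀ * (2 * a * A 1 l₀ + b) = 0 := by
      linear_combination hG3 l₀ - A 3 l₀ * hP
    have hQ : 2 * a * A 1 l₀ + b = 0 := by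
      rcases mul_eq_zero.mp hQ0 with h | h
      · rcases mul_eq_zero.mp h with h' | h'
        · norm_num at h'
        · exact absurd h' h2'
      · exact h
    have h6 : 6 * a * (A 2 l₀ * A 2 l₀) = 0 := by
      linear_combination hG4 l₀ - A 4 l₀ * hP - 4 * A 3 l₀ * hQ
    have ha : a = 0 := by
      rcases mul_eq_zero.mp h6 with h | h
      · rcases mul_eq_zero.mp h with h' | h'
        · norm_num at h'
        · exact h'
      · exact absurd h (mul_ne_zero h2' h2')
    have hb : b = 0 := by linear_combination hQ - 2 * A 1 l₀ * ha
    have hd : d = 0 := by linear_combination hP - 2 * A 0 l₀ * ha - l₀ * hb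
    have hc : c = 0 := by
      linear_combination (1/2 : ℝ) * hG2 l₀ - (A 1 l₀ * A 1 l₀ + A 0 l₀ * A 2 l₀) * ha
        - (1/2 : ℝ) * (A 2 l₀ * l₀ + 2 * A 1 l₀) * hb - (1/2 : ℝ) * A 2 l₀ * hd
    have hf : f = 0 := by
      linear_combination hconic 0 - α 0 ^ 2 * ha - α 0 * hd
    have he : e = 0 := by
      linear_combination hconic 1 - α 1 ^ 2 * ha - α 1 * hb - hc - α 1 * hd - hf
    exact hne ⟨ha, hb, hc, hd, he, hf⟩
  -- P is continuous, hence nonzero near l₀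
  have hPcont : ContinuousAt (fun l => 2 * a * A 0 l + b * l + d) l₀ := by
    have hαc : Continuous (A 0) := by
      have : A 0 = α := by funext x; exact hA0 x
      rw [this]; exact hα.continuous
    have hbc : Continuous fun l : ℝ => b * l := continuous_const.mul continuous_id'
    exact (((continuous_const.mul hαc).add hbc).add continuous_const).continuousAt
  have hev : ∀ᶠ l in nhds l₀, 2 * a * A 0 l + b * l + d ≠ 0 := hPcont.eventually_ne hP0
  filter_upwards [hev] with l hP
  show 9 * (A 2 l) ^ 2 * A 5 l - 45 * A 2 l * A 3 l * A 4 l + 40 * (A 3 l) ^ 3 = 0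
  have key : (2 * a * A 0 l + b * l + d) ^ 3 *
      (9 * (A 2 l) ^ 2 * A 5 l - 45 * A 2 l * A 3 l * A 4 l + 40 * (A 3 l) ^ 3) = 0 := by
    linear_combination (9 * (A 2 l) ^ 2 * (2 * a * A 0 l + b * l + d) ^ 2) * hG5 l
      - (45 * A 2 l * (2 * a * A 0 l + b * l + d) *
          (A 3 l * (2 * a * A 0 l + b * l + d) + (2 * a * A 1 l + b) * A 2 l)) * hG4 l
      + (40 * (2 * a * A 0 l + b * l + d) ^ 2 * (A 3 l) ^ 2
          + 60 * (2 * a * A 1 l + b) * A 2 l * (2 * a * A 0 l + b * l + d) * A 3 l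
          + 90 * a * (A 2 l) ^ 3 * (2 * a * A 0 l + b * l + d)) * hG3 l
  exact (mul_eq_zero.mp key).resolve_left (pow_ne_zero 3 hP)
end

section
/- Consider vector fields on ℝ³×ℝ (coordinates (x,y,t,λ)): X̃ = ∂_x − (λ² + v_t λ − u + v_y)∂_t − (u_t λ + u_y)∂_λ and Ỹ = ∂_y − (λ + v_t)∂_t − u_t ∂_λ, where u,v are smooth functions of (x,y,t). Then the commutator [X̃, Ỹ] lies in the span of X̃ and Ỹ at every point if and only if u and v satisfy the Manakov–Santini system F = 0, G = 0, where F = u_{xt} + (u u_t)_t + v_t u_{yt} − u_{yy} − v_y u_{tt} + u_t², and G = v_{xt} + u v_{tt} + v_t v_{yt} − v_{yy} − v_y v_{tt}. -/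
noncomputable def pd (i : Fin 4) (f : (Fin 4 → ℝ) → ℝ) (p : Fin 4 → ℝ) : ℝ :=
  fderiv ℝ f p (Pi.single i 1)

noncomputable def lie (X Y : (Fin 4 → ℝ) → (Fin 4 → ℝ)) (p : Fin 4 → ℝ) : Fin 4 → ℝ :=
  fderiv ℝ Y p (X p) - fderiv ℝ X p (Y p)

section helpers
variable {f g : (Fin 4 → ℝ) → ℝ} {p : Fin 4 → ℝ} {i j : Fin 4}

lemma contDiff_pd (hf : ContDiff ℝ (⊤ : ℕ∞) f) (i : Fin 4) : ContDiff ℝ (⊤ : ℕ∞) (pd i f) :=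
  (hf.fderiv_right (by simp)).clm_apply contDiff_const

lemma pd_comm (hf : ContDiff ℝ (⊤ : ℕ∞) f) (i j : Fin 4) (p : Fin 4 → ℝ) :
    pd i (pd j f) p = pd j (pd i f) p := by
  have hdf : ContDiff ℝ (⊤ : ℕ∞) (fderiv ℝ f) := hf.fderiv_right (by simp)
  have h2 : HasFDerivAt (fderiv ℝ f) (fderiv ℝ (fderiv ℝ f) p) p :=
    (hdf.differentiable (by simp) p).hasFDerivAt
  have h1 : ∀ y, HasFDerivAt f (fderiv ℝ f y) y :=
    fun y => (hf.differentiable (by simp) y).hasFDerivAt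
  have hsym := second_derivative_symmetric h1 h2 (Pi.single i 1) (Pi.single j 1)
  have e : ∀ k l : Fin 4, pd k (pd l f) p
      = fderiv ℝ (fderiv ℝ f) p (Pi.single k 1) (Pi.single l 1) := by
    intro k l
    have h : pd l f = fun q => (fderiv ℝ f q) (Pi.single l 1) := rfl
    rw [pd, h, fderiv_clm_apply (hdf.differentiable (by simp) p) (differentiableAt_const _)]
    simp
  rw [e, e, hsym]

lemma pd_add (hf : DifferentiableAt ℝ f p) (hg : DifferentiableAt ℝ g p) :
    pd i (fun q => f q + g q) p = pd i f p + pd i g p := by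
  simp [pd, fderiv_fun_add hf hg]

lemma pd_sub (hf : DifferentiableAt ℝ f p) (hg : DifferentiableAt ℝ g p) :
    pd i (fun q => f q - g q) p = pd i f p - pd i g p := by
  simp [pd, fderiv_fun_sub hf hg]

lemma pd_mul (hf : DifferentiableAt ℝ f p) (hg : DifferentiableAt ℝ g p) :
    pd i (fun q => f q * g q) p = pd i f p * g p + f p * pd i g p := by
  simp [pd, fderiv_fun_mul hf hg]; ring

lemma pd_neg : pd i (fun q => -f q) p = -pd i f p := by
  simp [pd, fderiv_neg]

lemma pd_const (c : ℝ) : pd i (fun _ => c) p = 0 := by simp [pd]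

lemma pd_coord : pd i (fun q => q j) p = if j = i then 1 else 0 := by
  have h : (fun q : Fin 4 → ℝ => q j) = (ContinuousLinearMap.proj j : (Fin 4 → ℝ) →L[ℝ] ℝ) := rfl
  rw [pd, h, ContinuousLinearMap.fderiv]
  simp [Pi.single_apply]

lemma pd_sq : pd i (fun q => (q j)^2) p = 2 * p j * (if j = i then 1 else 0) := by
  have h : (fun q : Fin 4 → ℝ => (q j)^2) = fun q => q j * q j := by funext q; ring
  rw [h, pd_mul (by fun_prop) (by fun_prop), pd_coord]; ring

lemma fderiv_eq_sum (hf : DifferentiableAt ℝ f p) (w : Fin 4 → ℝ) :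
    fderiv ℝ f p w = ∑ k, w k * pd k f p := by
  have hw : w = ∑ k : Fin 4, w k • (Pi.single k (1:ℝ) : Fin 4 → ℝ) := by
    funext j; simp [Finset.sum_apply, Pi.single_apply]
  conv_lhs => rw [hw]
  rw [map_sum]
  simp [pd]

end helpers

/-- Manakov–Santini Lax pair: with coordinates `(x,y,t,λ)` on `ℝ³×ℝ` (indices `0,1,2,3`)
and `u, v` smooth functions of `(x,y,t)` (i.e. independent of `λ`), the commutator of
`X̃ = ∂_x − (λ² + v_t λ − u + v_y)∂_t − (u_t λ + u_y)∂_λ` and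
`Ỹ = ∂_y − (λ + v_t)∂_t − u_t ∂_λ` lies in the span of `X̃` and `Ỹ` at every point if and
only if `u`, `v` satisfy the Manakov–Santini system `F = 0`, `G = 0`, where
`F = u_{xt} + (u u_t)_t + v_t u_{yt} − u_{yy} − v_y u_{tt}`
  `= u_{xt} + u u_{tt} + v_t u_{yt} − u_{yy} − v_y u_{tt} + u_t²` and
`G = v_{xt} + u v_{tt} + v_t v_{yt} − v_{yy} − v_y v_{tt}`. -/
theorem stmt12 (u v : (Fin 4 → ℝ) → ℝ)
    (hu : ContDiff ℝ (⊤ : ℕ∞) u) (hv : ContDiff ℝ (⊤ : ℕ∞) v)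
    (hul : ∀ p, pd 3 u p = 0) (hvl : ∀ p, pd 3 v p = 0)
    (X Y : (Fin 4 → ℝ) → (Fin 4 → ℝ))
    (hX : ∀ p, X p = ![1, 0,
      -((p 3) ^ 2 + pd 2 v p * p 3 - u p + pd 1 v p),
      -(pd 2 u p * p 3 + pd 1 u p)])
    (hY : ∀ p, Y p = ![0, 1, -(p 3 + pd 2 v p), -(pd 2 u p)])
    (F G : (Fin 4 → ℝ) → ℝ)
    (hF : ∀ p, F p = pd 0 (pd 2 u) p + u p * pd 2 (pd 2 u) p + pd 2 v p * pd 1 (pd 2 u) p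
      - pd 1 (pd 1 u) p - pd 1 v p * pd 2 (pd 2 u) p + (pd 2 u p) ^ 2)
    (hG : ∀ p, G p = pd 0 (pd 2 v) p + u p * pd 2 (pd 2 v) p + pd 2 v p * pd 1 (pd 2 v) p
      - pd 1 (pd 1 v) p - pd 1 v p * pd 2 (pd 2 v) p) :
    (∀ p, lie X Y p ∈ Submodule.span ℝ {X p, Y p}) ↔ (∀ p, F p = 0 ∧ G p = 0) := by
  -- smoothness facts
  have hdu : Differentiable ℝ u := hu.differentiable (by simp)
  have hdv : Differentiable ℝ v := hv.differentiable (by simp)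
  have hpu : ∀ i, Differentiable ℝ (pd i u) := fun i => (contDiff_pd hu i).differentiable (by simp)
  have hpv : ∀ i, Differentiable ℝ (pd i v) := fun i => (contDiff_pd hv i).differentiable (by simp)
  -- vanishing of λ-derivatives of first derivatives
  have hzu : ∀ (j : Fin 4) (p), pd 3 (pd j u) p = 0 := by
    intro j p
    rw [pd_comm hu 3 j p]
    have h0 : pd 3 u = fun _ => (0:ℝ) := funext hul
    rw [h0, pd_const]
  have hzv : ∀ (j : Fin 4) (p), pd 3 (pd j v) p = 0 := by
    intro j p
    rw [pd_comm hv 3 j p]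
    have h0 : pd 3 v = fun _ => (0:ℝ) := funext hvl
    rw [h0, pd_const]
  -- component function families
  set φX : Fin 4 → ((Fin 4 → ℝ) → ℝ) := ![fun _ => 1, fun _ => 0,
    (fun q => -((q 3)^2 + pd 2 v q * q 3 - u q + pd 1 v q)),
    (fun q => -(pd 2 u q * q 3 + pd 1 u q))] with hφX
  set φY : Fin 4 → ((Fin 4 → ℝ) → ℝ) := ![fun _ => 0, fun _ => 1,
    (fun q => -(q 3 + pd 2 v q)), (fun q => -(pd 2 u q))] with hφY
  have hdφX : ∀ i, Differentiable ℝ (φX i) := by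
    intro i; fin_cases i <;> simp [hφX] <;> fun_prop
  have hdφY : ∀ i, Differentiable ℝ (φY i) := by
    intro i; fin_cases i <;> simp [hφY] <;> fun_prop
  have hXfun : X = fun q k => φX k q := by
    funext q; rw [hX]; funext k; fin_cases k <;> simp [hφX]
  have hYfun : Y = fun q k => φY k q := by
    funext q; rw [hY]; funext k; fin_cases k <;> simp [hφY]
  -- the bracket, componentwise
  have hcomp : ∀ (p : Fin 4 → ℝ) (k : Fin 4),
      lie X Y p k = fderiv ℝ (φY k) p (X p) - fderiv ℝ (φX k) p (Y p) := by
    intro p k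
    have eY : fderiv ℝ Y p = ContinuousLinearMap.pi (fun i => fderiv ℝ (φY i) p) := by
      rw [hYfun]; exact fderiv_pi (fun i => (hdφY i) p)
    have eX : fderiv ℝ X p = ContinuousLinearMap.pi (fun i => fderiv ℝ (φX i) p) := by
      rw [hXfun]; exact fderiv_pi (fun i => (hdφX i) p)
    simp [lie, eX, eY, ContinuousLinearMap.pi_apply]
  have hlie : ∀ p, lie X Y p = ![0, 0, -(G p), -(F p)] := by
    intro p
    funext k
    have hXp := hX p
    have hYp := hY p
    fin_cases k
    · rw [hcomp]
      show fderiv ℝ (fun _ => (0:ℝ)) p (X p) - fderiv ℝ (fun _ => (1:ℝ)) p (Y p) = 0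
      simp
    · rw [hcomp]
      show fderiv ℝ (fun _ => (1:ℝ)) p (X p) - fderiv ℝ (fun _ => (0:ℝ)) p (Y p) = 0
      simp
    · -- t-component: -G
      rw [hcomp]
      show fderiv ℝ (fun q => -(q 3 + pd 2 v q)) p (X p)
          - fderiv ℝ (fun q => -((q 3)^2 + pd 2 v q * q 3 - u q + pd 1 v q)) p (Y p) = -(G p)
      rw [fderiv_eq_sum (by fun_prop) (X p), fderiv_eq_sum (by fun_prop) (Y p)]
      rw [Fin.sum_univ_four, Fin.sum_univ_four, hXp, hYp]
      simp (disch := fun_prop) only [pd_neg, pd_add, pd_sub, pd_mul, pd_sq, pd_coord,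
        Matrix.cons_val_zero, Matrix.cons_val_one, Matrix.head_cons,
        Matrix.cons_val_two, Matrix.tail_cons, Matrix.cons_val_three]
      rw [hG p]
      simp only [hzu, hzv, hul, hvl, pd_comm hv 2 1 p,
        show ¬(3:Fin 4) = 0 by decide, show ¬(3:Fin 4) = 1 by decide,
        show ¬(3:Fin 4) = 2 by decide, if_false, if_true]
      ring
    · -- λ-component: -F
      rw [hcomp]
      show fderiv ℝ (fun q => -(pd 2 u q)) p (X p)
          - fderiv ℝ (fun q => -(pd 2 u q * q 3 + pd 1 u q)) p (Y p) = -(F p)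
      rw [fderiv_eq_sum (by fun_prop) (X p), fderiv_eq_sum (by fun_prop) (Y p)]
      rw [Fin.sum_univ_four, Fin.sum_univ_four, hXp, hYp]
      simp (disch := fun_prop) only [pd_neg, pd_add, pd_sub, pd_mul, pd_sq, pd_coord,
        Matrix.cons_val_zero, Matrix.cons_val_one, Matrix.head_cons,
        Matrix.cons_val_two, Matrix.tail_cons, Matrix.cons_val_three]
      rw [hF p]
      simp only [hzu, hzv, hul, hvl, pd_comm hu 2 1 p,
        show ¬(3:Fin 4) = 0 by decide, show ¬(3:Fin 4) = 1 by decide,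
        show ¬(3:Fin 4) = 2 by decide, if_false, if_true]
      ring
  constructor
  · intro h p
    obtain ⟨a, b, hab⟩ := Submodule.mem_span_pair.1 (h p)
    rw [hlie p, hX p, hY p] at hab
    have h0 := congrFun hab 0
    have h1 := congrFun hab 1
    have h2 := congrFun hab 2
    have h3 := congrFun hab 3
    simp at h0 h1 h2 h3
    subst h0 h1
    simp at h2 h3
    exact ⟨by linarith, by linarith⟩
  · intro h p
    rw [hlie p, (h p).1, (h p).2]
    have : (![0, 0, -(0:ℝ), -0] : Fin 4 → ℝ) = 0 := by
      funext k; fin_cases k <;> simp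
    rw [this]
    exact Submodule.zero_mem _
end

section
/- Let α,β,γ,δ : ℝ → ℝ be smooth with α'δ' − β'γ' ≠ 0 at λ₀ (nondegeneracy condition z2). Define X(λ) = e₁ − α(λ)e₃ − β(λ)e₄ and Y(λ) = e₂ − γ(λ)e₃ − δ(λ)e₄ in ℝ⁴, and ϖ(λ) = X(λ) ∧ Y(λ) ∈ Λ²ℝ⁴. Then ϖ'(λ₀) ∧ ϖ'(λ₀) ≠ 0 in Λ⁴ℝ⁴, and equivalently X(λ₀), Y(λ₀), X'(λ₀), Y'(λ₀) are linearly independent. -/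
open ExteriorAlgebra

noncomputable def auxFam : ∀ i : ℕ, (Fin 4 → ℝ) [⋀^Fin i]→ₗ[ℝ] ℝ
  | 4 => Matrix.detRowAlternating
  | _ => 0

lemma auxFam_prod (a b c d : Fin 4 → ℝ) :
    ExteriorAlgebra.liftAlternating auxFam
      (ι ℝ a * ι ℝ b * ι ℝ c * ι ℝ d) = Matrix.det (Matrix.of ![a, b, c, d]) := by
  have h : ι ℝ a * ι ℝ b * ι ℝ c * ι ℝ d = ιMulti ℝ 4 ![a, b, c, d] := by
    simp [ιMulti_apply, List.ofFn_succ, mul_assoc]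
  rw [h, liftAlternating_apply_ιMulti]
  rfl

lemma derivVec (α β : ℝ → ℝ) (hα : ContDiff ℝ (⊤ : ℕ∞) α) (hβ : ContDiff ℝ (⊤ : ℕ∞) β) (l₀ : ℝ)
    (u v : ℝ) :
    deriv (fun l => ![u, v, -α l, -β l]) l₀ = ![0, 0, -deriv α l₀, -deriv β l₀] := by
  have hDa := (hα.differentiable (by simp) l₀).hasDerivAt
  have hDb := (hβ.differentiable (by simp) l₀).hasDerivAt
  have : HasDerivAt (fun l => ![u, v, -α l, -β l]) ![0, 0, -deriv α l₀, -deriv β l₀] l₀ := by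
    apply hasDerivAt_pi.2
    intro i
    fin_cases i
    · simpa using hasDerivAt_const l₀ u
    · simpa using hasDerivAt_const l₀ v
    · exact hDa.neg
    · exact hDb.neg
  exact this.deriv

lemma det_fin_four' (a b c d e f g h i j k l m n o p : ℝ) :
    Matrix.det !![a,b,c,d; e,f,g,h; i,j,k,l; m,n,o,p] =
      a*(f*(k*p-l*o) - g*(j*p-l*n) + h*(j*o-k*n))
      - b*(e*(k*p-l*o) - g*(i*p-l*m) + h*(i*o-k*m))
      + c*(e*(j*p-l*n) - f*(i*p-l*m) + h*(i*n-j*m))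
      - d*(e*(j*o-k*n) - f*(i*o-k*m) + g*(i*n-j*m)) := by
  simp [Matrix.det_succ_row_zero, Fin.sum_univ_succ, Fin.succAbove,
    Fin.castSucc, Fin.castAdd, Fin.castLE]
  ring

lemma detFour (a b c d : Fin 4 → ℝ) :
    Matrix.det (Matrix.of ![a, b, c, d]) =
      Matrix.det (!![a 0, a 1, a 2, a 3; b 0, b 1, b 2, b 3;
        c 0, c 1, c 2, c 3; d 0, d 1, d 2, d 3]) := by
  congr 1
  ext i j
  fin_cases i <;> fin_cases j <;> rfl

lemma vec4_apply (x y z w : ℝ) :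
    ![x, y, z, w] 0 = x ∧ ![x, y, z, w] 1 = y ∧ ![x, y, z, w] 2 = z ∧ ![x, y, z, w] 3 = w :=
  ⟨rfl, rfl, rfl, rfl⟩

/-- 4D nondegeneracy: let `α,β,γ,δ : ℝ → ℝ` be smooth with `α'δ' − β'γ' ≠ 0` at `l₀`, and
set `X(λ) = e₁ − α(λ)e₃ − β(λ)e₄`, `Y(λ) = e₂ − γ(λ)e₃ − δ(λ)e₄` in `ℝ⁴` and
`ϖ(λ) = X(λ) ∧ Y(λ) ∈ Λ²ℝ⁴`.  Then `ϖ'(l₀) ∧ ϖ'(l₀) ≠ 0` (where by the Leibniz rule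
`ϖ' = X' ∧ Y + X ∧ Y'`), and equivalently `X(l₀), Y(l₀), X'(l₀), Y'(l₀)` are linearly
independent. -/
theorem stmt14 (α β γ δ : ℝ → ℝ)
    (hα : ContDiff ℝ (⊤ : ℕ∞) α) (hβ : ContDiff ℝ (⊤ : ℕ∞) β) (hγ : ContDiff ℝ (⊤ : ℕ∞) γ) (hδ : ContDiff ℝ (⊤ : ℕ∞) δ)
    (l₀ : ℝ)
    (hnd : deriv α l₀ * deriv δ l₀ - deriv β l₀ * deriv γ l₀ ≠ 0)
    (X Y X' Y' : ℝ → (Fin 4 → ℝ))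
    (hX : ∀ l, X l = ![1, 0, -α l, -β l])
    (hY : ∀ l, Y l = ![0, 1, -γ l, -δ l])
    (hX' : ∀ l, X' l = deriv X l) (hY' : ∀ l, Y' l = deriv Y l) :
    (let ι := ExteriorAlgebra.ι (R := ℝ) (M := Fin 4 → ℝ)
     let ϖ' := ι (X' l₀) * ι (Y l₀) + ι (X l₀) * ι (Y' l₀)
     ϖ' * ϖ' ≠ 0) ∧
    LinearIndependent ℝ ![X l₀, Y l₀, X' l₀, Y' l₀] := by
  have hXf : X = fun l => ![1, 0, -α l, -β l] := funext hX
  have hYf : Y = fun l => ![0, 1, -γ l, -δ l] := funext hY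
  have hXv : X l₀ = ![1, 0, -α l₀, -β l₀] := hX l₀
  have hYv : Y l₀ = ![0, 1, -γ l₀, -δ l₀] := hY l₀
  have hX'v : X' l₀ = ![0, 0, -deriv α l₀, -deriv β l₀] := by
    rw [hX' l₀, hXf, derivVec α β hα hβ l₀ 1 0]
  have hY'v : Y' l₀ = ![0, 0, -deriv γ l₀, -deriv δ l₀] := by
    rw [hY' l₀, hYf, derivVec γ δ hγ hδ l₀ 0 1]
  set A := deriv α l₀ with hA
  set B := deriv β l₀ with hB
  set C := deriv γ l₀ with hC
  set D := deriv δ l₀ with hD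
  constructor
  · show (ι ℝ (X' l₀) * ι ℝ (Y l₀) + ι ℝ (X l₀) * ι ℝ (Y' l₀)) *
      (ι ℝ (X' l₀) * ι ℝ (Y l₀) + ι ℝ (X l₀) * ι ℝ (Y' l₀)) ≠ 0
    intro hzero
    have hF := congrArg (ExteriorAlgebra.liftAlternating auxFam) hzero
    rw [map_zero] at hF
    simp only [add_mul, mul_add, map_add, ← mul_assoc] at hF
    rw [auxFam_prod, auxFam_prod, auxFam_prod, auxFam_prod] at hF
    rw [detFour, detFour, detFour, detFour] at hF
    rw [hXv, hYv, hX'v, hY'v] at hF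
    simp only [Matrix.cons_val_zero, Matrix.cons_val_one, Matrix.head_cons,
      Matrix.cons_val_two, Matrix.tail_cons, Matrix.cons_val_three] at hF
    rw [det_fin_four', det_fin_four', det_fin_four', det_fin_four'] at hF
    apply hnd
    nlinarith [hF, sq_nonneg (A * D - B * C)]
  · have hrw : (![X l₀, Y l₀, X' l₀, Y' l₀] : Fin 4 → Fin 4 → ℝ) =
        (Matrix.of ![X l₀, Y l₀, X' l₀, Y' l₀]).row := rfl
    rw [hrw, Matrix.linearIndependent_rows_iff_isUnit,
      Matrix.isUnit_iff_isUnit_det, isUnit_iff_ne_zero]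
    rw [detFour, hXv, hYv, hX'v, hY'v]
    simp only [Matrix.cons_val_zero, Matrix.cons_val_one, Matrix.head_cons,
      Matrix.cons_val_two, Matrix.tail_cons, Matrix.cons_val_three]
    rw [det_fin_four']
    intro h
    apply hnd
    nlinarith [h]
end

section
/- Let Q₁, Q₂ be nondegenerate quadratic forms on a 4-dimensional vector space over an algebraically closed field, with non-proportional associated projective quadric surfaces in ℙ³. Then the intersection of the two quadric surfaces contains at most 4 projective lines. -/
/-!
Over an algebraically closed field all nondegenerate symmetric forms are congruent, so after a
change of coordinates `M₁` is the Gram matrix of `2 (x₀x₃ - x₁x₂)`, whose quadric is the image of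
the Segre embedding `ℙ¹ × ℙ¹ → ℙ³`, `(u, a) ↦ u ⊗ a`. A line on it is `u ⊗ ℙ¹` or
`ℙ¹ ⊗ a`, giving two one-parameter rulings. If three lines of one ruling lie on the second quadric,
then for each `a` the binary quadratic form `u ↦ Q₂(u ⊗ a)` has three pairwise independent zeros,
hence vanishes; so `Q₂` vanishes on the whole Segre quadric, which forces `M₂` to be proportional
to `M₁`. Hence each ruling contributes at most two common lines.
-/

open Matrix

section

variable {K : Type*} [Field K] {n : Type*}

theorem Matrix.exists_transpose_mul_mul_eq_one [IsAlgClosed K] [Fintype n] [DecidableEq n]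
    (h2 : (2 : K) ≠ 0) {M : Matrix n n K} (hM : M.IsSymm) (hd : M.det ≠ 0) :
    ∃ P : Matrix n n K, IsUnit P.det ∧ Pᵀ * M * P = 1 := by
  have : Invertible (2 : K) := invertibleOfNonzero h2
  set B := M.toBilin'
  obtain ⟨v, hv⟩ := LinearMap.BilinForm.exists_orthogonal_basis
    (LinearMap.BilinForm.isSymm_iff.1 (Matrix.isSymm_toBilin'_iff_isSymm.2 hM))
  have hvv : ∀ i, B (v i) (v i) ≠ 0 :=
    LinearMap.BilinForm.iIsOrtho.not_isOrtho_basis_self_of_nondegenerate hv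
      (LinearMap.BilinForm.nondegenerate_toBilin'_of_det_ne_zero' M hd)
  choose t ht using fun i => IsAlgClosed.exists_pow_nat_eq (B (v i) (v i))⁻¹ two_pos
  have ht0 : ∀ i, IsUnit (t i) := fun i =>
    isUnit_iff_ne_zero.2 fun h => hvv i (by simpa [h] using (ht i).symm)
  let e : Fin (Module.finrank K (n → K)) ≃ n :=
    (finCongr (Module.finrank_fintype_fun_eq_card K)).trans (Fintype.equivFin n).symm
  let c := (v.isUnitSMul ht0).reindex e
  refine ⟨(Pi.basisFun K n).toMatrix c, ?_, ?_⟩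
  · rw [← Module.Basis.det_apply]
    exact (Pi.basisFun K n).isUnit_det c
  · have hM : M = LinearMap.BilinForm.toMatrix (Pi.basisFun K n) B := by
      rw [LinearMap.BilinForm.toMatrix_basisFun, LinearMap.BilinForm.toMatrix'_toBilin']
    rw [hM, LinearMap.BilinForm.toMatrix_mul_basis_toMatrix]
    ext i j
    rw [LinearMap.BilinForm.toMatrix_apply]
    simp only [c, Module.Basis.reindex_apply, Module.Basis.isUnitSMul_apply, map_smul,
      LinearMap.smul_apply, smul_eq_mul]
    rcases eq_or_ne i j with rfl | hij
    · rw [one_apply_eq, ← mul_assoc, mul_comm _ (t _), ← pow_two, ht, inv_mul_cancel₀ (hvv _)]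
    · rw [one_apply_ne hij, hv (e.symm.injective.ne hij), mul_zero, mul_zero]

theorem Matrix.exists_transpose_mul_mul_eq [IsAlgClosed K] [Fintype n] [DecidableEq n]
    (h2 : (2 : K) ≠ 0) {A B : Matrix n n K} (hA : A.IsSymm) (hAd : A.det ≠ 0) (hB : B.IsSymm)
    (hBd : B.det ≠ 0) : ∃ P : Matrix n n K, IsUnit P.det ∧ Pᵀ * A * P = B := by
  obtain ⟨P, hP, hPA⟩ := exists_transpose_mul_mul_eq_one h2 hA hAd
  obtain ⟨Q, hQ, hQB⟩ := exists_transpose_mul_mul_eq_one h2 hB hBd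
  refine ⟨P * Q⁻¹, by simpa [det_mul] using hP.mul (isUnit_nonsing_inv_det Q hQ), ?_⟩
  calc (P * Q⁻¹)ᵀ * A * (P * Q⁻¹) = (Q⁻¹)ᵀ * (Pᵀ * A * P) * Q⁻¹ := by
        simp only [transpose_mul, Matrix.mul_assoc]
    _ = (Q * Q⁻¹)ᵀ * B * (Q * Q⁻¹) := by
        rw [hPA, ← hQB, transpose_mul]
        simp only [Matrix.mul_assoc]
    _ = B := by rw [mul_nonsing_inv Q hQ, transpose_one, Matrix.one_mul, Matrix.mul_one]

theorem Matrix.transpose_mul_mul_inj [Fintype n] [DecidableEq n] {A B P : Matrix n n K}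
    (hP : IsUnit P.det) : Pᵀ * A * P = Pᵀ * B * P ↔ A = B := by
  have hPu : IsUnit P := (isUnit_iff_isUnit_det P).2 hP
  have hPTu : IsUnit Pᵀ := (isUnit_iff_isUnit_det Pᵀ).2 (by rwa [det_transpose])
  rw [hPu.mul_left_inj, hPTu.mul_right_inj]

theorem Matrix.dotProduct_transpose_mul_mul_mulVec [Fintype n] (M P : Matrix n n K)
    (v : n → K) : v ⬝ᵥ (Pᵀ * M * P) *ᵥ v = (P *ᵥ v) ⬝ᵥ M *ᵥ (P *ᵥ v) := by
  rw [← mulVec_mulVec, ← mulVec_mulVec, dotProduct_mulVec v, vecMul_transpose]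

theorem Matrix.dotProduct_mulVec_smul_add_smul [Fintype n] (N : Matrix n n K) (x y : n → K)
    (s t : K) : (s • x + t • y) ⬝ᵥ N *ᵥ (s • x + t • y) =
      (x ⬝ᵥ N *ᵥ x) * s ^ 2 + (x ⬝ᵥ N *ᵥ y + y ⬝ᵥ N *ᵥ x) * (s * t) + (y ⬝ᵥ N *ᵥ y) * t ^ 2 := by
  simp only [mulVec_add, mulVec_smul, dotProduct_add, add_dotProduct, dotProduct_smul,
    smul_dotProduct, smul_eq_mul]
  ring

def Matrix.quadricLines [Fintype n] (M : Matrix n n K) : Set (Submodule K (n → K)) :=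
  {W | Module.finrank K W = 2 ∧ ∀ v ∈ W, v ⬝ᵥ M *ᵥ v = 0}

theorem Matrix.quadricLines_inter_quadricLines [Fintype n] (A B : Matrix n n K) :
    A.quadricLines ∩ B.quadricLines =
      {W : Submodule K (n → K) | Module.finrank K W = 2 ∧
        ∀ v ∈ W, v ⬝ᵥ A *ᵥ v = 0 ∧ v ⬝ᵥ B *ᵥ v = 0} := by
  ext W
  simp [quadricLines, forall_and]
  tauto

theorem Matrix.encard_quadricLines_inter_le [Fintype n] [DecidableEq n] (A B P : Matrix n n K)
    (hP : IsUnit P.det) :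
    (A.quadricLines ∩ B.quadricLines).encard ≤
      ((Pᵀ * A * P).quadricLines ∩ (Pᵀ * B * P).quadricLines).encard := by
  let e := P.toLinearEquiv' (P.invertibleOfIsUnitDet hP)
  have hmaps : ∀ {M : Matrix n n K} {W}, W ∈ M.quadricLines →
      W.map (e.symm : (n → K) →ₗ[K] n → K) ∈ (Pᵀ * M * P).quadricLines := by
    rintro M W ⟨hW, hiso⟩
    refine ⟨by rw [LinearEquiv.finrank_map_eq, hW], fun v hv => ?_⟩
    rw [dotProduct_transpose_mul_mul_mulVec]
    exact hiso _ ((Submodule.mem_map_equiv _).1 hv)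
  exact Set.encard_le_encard_of_injOn (fun W hW => ⟨hmaps hW.1, hmaps hW.2⟩)
    (Submodule.map_injective_of_injective e.symm.injective).injOn

theorem Set.encard_le_two_of_forall_ne_imp_eq {α : Type*} {s : Set α}
    (h : ∀ x ∈ s, ∀ y ∈ s, ∀ z ∈ s, x ≠ y → x ≠ z → y = z) : s.encard ≤ 2 := by
  by_contra! hs
  obtain ⟨t, hts, ht⟩ := Set.exists_subset_encard_eq (Order.add_one_le_of_lt hs)
  obtain ⟨x, y, z, hxy, hxz, hyz, rfl⟩ := Set.encard_eq_three.1 ht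
  exact hyz (h x (hts (by simp)) y (hts (by simp)) z (hts (by simp)) hxy hxz)

theorem exists_eq_smul_of_cross_eq_zero {u v : Fin 2 → K} (hu : u ≠ 0)
    (h : u 0 * v 1 - u 1 * v 0 = 0) : ∃ c : K, v = c • u := by
  by_cases h0 : u 0 = 0
  · have h1 : u 1 ≠ 0 := fun h1 => hu (by ext i; fin_cases i <;> simpa)
    refine ⟨v 1 / u 1, ?_⟩
    ext i; fin_cases i <;> simp <;> field_simp
    linear_combination -h
  · refine ⟨v 0 / u 0, ?_⟩
    ext i; fin_cases i <;> simp <;> field_simp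
    linear_combination h

theorem binary_quadratic_eq_zero_of_three_roots {α β γ : K} {u v w : Fin 2 → K}
    (huv : u 0 * v 1 - u 1 * v 0 ≠ 0) (huw : u 0 * w 1 - u 1 * w 0 ≠ 0)
    (hvw : v 0 * w 1 - v 1 * w 0 ≠ 0)
    (hu : α * u 0 ^ 2 + β * (u 0 * u 1) + γ * u 1 ^ 2 = 0)
    (hv : α * v 0 ^ 2 + β * (v 0 * v 1) + γ * v 1 ^ 2 = 0)
    (hw : α * w 0 ^ 2 + β * (w 0 * w 1) + γ * w 1 ^ 2 = 0) :
    α = 0 ∧ β = 0 ∧ γ = 0 := by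
  let T : Matrix (Fin 3) (Fin 3) K :=
    !![u 0 ^ 2, u 0 * u 1, u 1 ^ 2; v 0 ^ 2, v 0 * v 1, v 1 ^ 2; w 0 ^ 2, w 0 * w 1, w 1 ^ 2]
  have hT : T.det =
      (u 0 * v 1 - u 1 * v 0) * (u 0 * w 1 - u 1 * w 0) * (v 0 * w 1 - v 1 * w 0) := by
    simp [T, det_fin_three]
    ring
  have hzero := eq_zero_of_mulVec_eq_zero (M := T) (v := ![α, β, γ])
    (by rw [hT]; exact mul_ne_zero (mul_ne_zero huv huw) hvw)
    (by ext i; fin_cases i <;> simp [T, mulVec, dotProduct, Fin.sum_univ_three] <;>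
      first | linear_combination hu | linear_combination hv | linear_combination hw)
  exact ⟨congrFun hzero 0, congrFun hzero 1, congrFun hzero 2⟩

section Ruling

variable {V : Type*} [AddCommGroup V] [Module K V] (f : (Fin 2 → K) →ₗ[K] V →ₗ[K] (n → K))

theorem range_le_range_of_cross_eq_zero {u v : Fin 2 → K} (hu : u ≠ 0)
    (h : u 0 * v 1 - u 1 * v 0 = 0) : LinearMap.range (f v) ≤ LinearMap.range (f u) := by
  obtain ⟨c, rfl⟩ := exists_eq_smul_of_cross_eq_zero hu h
  rintro _ ⟨a, rfl⟩
  exact ⟨c • a, by simp only [map_smul, LinearMap.smul_apply]⟩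

theorem cross_ne_zero_of_range_ne [Fintype n] {u v : Fin 2 → K}
    (hu : Module.finrank K (LinearMap.range (f u)) = 2)
    (hv : Module.finrank K (LinearMap.range (f v)) = 2)
    (hne : LinearMap.range (f u) ≠ LinearMap.range (f v)) : u 0 * v 1 - u 1 * v 0 ≠ 0 := by
  intro h
  have hu0 : u ≠ 0 := by
    rintro rfl
    rw [map_zero, LinearMap.range_zero, finrank_bot] at hu
    omega
  exact hne (Submodule.eq_of_le_of_finrank_le (range_le_range_of_cross_eq_zero f hu0 h)
    (by rw [hu, hv])).symm

theorem forall_dotProduct_mulVec_eq_zero_of_three [Fintype n] (N : Matrix n n K)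
    {u v w : Fin 2 → K} (huv : u 0 * v 1 - u 1 * v 0 ≠ 0) (huw : u 0 * w 1 - u 1 * w 0 ≠ 0)
    (hvw : v 0 * w 1 - v 1 * w 0 ≠ 0)
    (hu : ∀ a, f u a ⬝ᵥ N *ᵥ f u a = 0) (hv : ∀ a, f v a ⬝ᵥ N *ᵥ f v a = 0)
    (hw : ∀ a, f w a ⬝ᵥ N *ᵥ f w a = 0) (s : Fin 2 → K) (a : V) :
    f s a ⬝ᵥ N *ᵥ f s a = 0 := by
  set x := f (Pi.single 0 1) a
  set y := f (Pi.single 1 1) a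
  have hf : ∀ s : Fin 2 → K, f s a = s 0 • x + s 1 • y := by
    intro s
    conv_lhs => rw [show s = s 0 • Pi.single 0 1 + s 1 • Pi.single 1 1 by
      ext i; fin_cases i <;> simp]
    simp only [map_add, map_smul, LinearMap.add_apply, LinearMap.smul_apply, x, y]
  have hq : ∀ s : Fin 2 → K, f s a ⬝ᵥ N *ᵥ f s a = (x ⬝ᵥ N *ᵥ x) * s 0 ^ 2 +
      (x ⬝ᵥ N *ᵥ y + y ⬝ᵥ N *ᵥ x) * (s 0 * s 1) + (y ⬝ᵥ N *ᵥ y) * s 1 ^ 2 := fun s => by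
    rw [hf, dotProduct_mulVec_smul_add_smul]
  obtain ⟨hα, hβ, hγ⟩ := binary_quadratic_eq_zero_of_three_roots huv huw hvw
    ((hq u).symm.trans (hu a)) ((hq v).symm.trans (hv a)) ((hq w).symm.trans (hw a))
  rw [hq, hα, hβ, hγ]
  ring

theorem encard_quadricLines_inter_range_le_two [Fintype n] (N : Matrix n n K)
    (hN : ∃ s a, f s a ⬝ᵥ N *ᵥ f s a ≠ 0) :
    (N.quadricLines ∩ Set.range fun u => LinearMap.range (f u)).encard ≤ 2 := by
  refine Set.encard_le_two_of_forall_ne_imp_eq ?_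
  rintro _ ⟨⟨hu, hisou⟩, u, rfl⟩ _ ⟨⟨hv, hisov⟩, v, rfl⟩ _ ⟨⟨hw, hisow⟩, w, rfl⟩ huv huw
  by_contra hvw
  obtain ⟨s, a, hsa⟩ := hN
  exact hsa (forall_dotProduct_mulVec_eq_zero_of_three f N
    (cross_ne_zero_of_range_ne f hu hv huv) (cross_ne_zero_of_range_ne f hu hw huw)
    (cross_ne_zero_of_range_ne f hv hw hvw) (fun a => hisou _ ⟨a, rfl⟩)
    (fun a => hisov _ ⟨a, rfl⟩) (fun a => hisow _ ⟨a, rfl⟩) s a)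

end Ruling

theorem eq_range_of_le_span_of_cross_eq_zero [Fintype n]
    (f : (Fin 2 → K) →ₗ[K] (Fin 2 → K) →ₗ[K] (n → K)) {W : Submodule K (n → K)}
    (hW : Module.finrank K W = 2) {u v a b : Fin 2 → K}
    (hWle : W ≤ Submodule.span K {f u a, f v b}) (hx : f u a ≠ 0)
    (h : u 0 * v 1 - u 1 * v 0 = 0) : W = LinearMap.range (f u) := by
  have hu : u ≠ 0 := by rintro rfl; exact hx (by rw [map_zero, LinearMap.zero_apply])
  refine Submodule.eq_of_le_of_finrank_le (hWle.trans (Submodule.span_le.2 ?_)) ?_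
  · exact Set.insert_subset (LinearMap.mem_range_self _ a)
      (Set.singleton_subset_iff.2 (range_le_range_of_cross_eq_zero f hu h ⟨b, rfl⟩))
  · rw [hW]
    exact (LinearMap.finrank_range_le _).trans (by simp)

/-- `x ⬝ᵥ segreForm K *ᵥ x` is twice the determinant of `!![x 0, x 1; x 2, x 3]`. -/
def segreForm (K : Type*) [Field K] : Matrix (Fin 4) (Fin 4) K :=
  !![0, 0, 0, 1; 0, 0, -1, 0; 0, -1, 0, 0; 1, 0, 0, 0]

/-- `segre u a` is the outer product `u ⊗ a`, flattened row by row. -/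
def segre : (Fin 2 → K) →ₗ[K] (Fin 2 → K) →ₗ[K] (Fin 4 → K) :=
  LinearMap.mk₂ K (fun u a => ![u 0 * a 0, u 0 * a 1, u 1 * a 0, u 1 * a 1])
    (fun _ _ _ => by ext i; fin_cases i <;> simp <;> ring)
    (fun _ _ _ => by ext i; fin_cases i <;> simp <;> ring)
    (fun _ _ _ => by ext i; fin_cases i <;> simp <;> ring)
    (fun _ _ _ => by ext i; fin_cases i <;> simp <;> ring)

theorem segre_apply (u a : Fin 2 → K) :
    segre u a = ![u 0 * a 0, u 0 * a 1, u 1 * a 0, u 1 * a 1] := rfl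

theorem segreForm_isSymm : (segreForm K).IsSymm := by
  ext i j
  fin_cases i <;> fin_cases j <;> rfl

theorem det_segreForm : (segreForm K).det = 1 := by
  simp [segreForm, det_succ_row_zero, Fin.sum_univ_succ, Fin.succAbove]
  norm_num

theorem dotProduct_segreForm_mulVec (x : Fin 4 → K) :
    x ⬝ᵥ segreForm K *ᵥ x = 2 * (x 0 * x 3 - x 1 * x 2) := by
  simp [segreForm, dotProduct, mulVec, Fin.sum_univ_four]
  ring

theorem segre_add_segre_dotProduct_segreForm_mulVec (u v a b : Fin 2 → K) :
    (segre u a + segre v b) ⬝ᵥ segreForm K *ᵥ (segre u a + segre v b) =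
      2 * ((u 0 * v 1 - u 1 * v 0) * (a 0 * b 1 - a 1 * b 0)) := by
  rw [dotProduct_segreForm_mulVec]
  simp only [segre_apply, Pi.add_apply, Matrix.cons_val]
  ring

theorem exists_segre_eq {x : Fin 4 → K} (hx : x 0 * x 3 = x 1 * x 2) :
    ∃ u a, segre u a = x := by
  by_cases h0 : x 0 = 0
  · have h12 : x 1 * x 2 = 0 := by rw [← hx, h0, zero_mul]
    rcases mul_eq_zero.1 h12 with h1 | h2
    · exact ⟨![0, 1], ![x 2, x 3], by ext i; fin_cases i <;> simp [segre_apply, h0, h1]⟩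
    · exact ⟨![x 1, x 3], ![0, 1], by ext i; fin_cases i <;> simp [segre_apply, h0, h2]⟩
  · refine ⟨![x 0, x 2], ![1, x 1 / x 0], ?_⟩
    ext i; fin_cases i <;> simp [segre_apply] <;> field_simp
    linear_combination -hx

theorem quadricLines_segreForm_subset (h2 : (2 : K) ≠ 0) :
    (segreForm K).quadricLines ⊆ (Set.range fun u => LinearMap.range (segre u)) ∪
      Set.range fun a => LinearMap.range (segre.flip a) := by
  rintro W ⟨hW, hiso⟩
  have hsegre : ∀ x ∈ W, ∃ u a, segre u a = x := fun x hx =>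
    exists_segre_eq (by
      have := hiso x hx
      rw [dotProduct_segreForm_mulVec] at this
      linear_combination (mul_eq_zero.1 this).resolve_left h2)
  let b := Module.finBasisOfFinrankEq K W hW
  have hspan : W ≤ Submodule.span K {((b 0 : W) : Fin 4 → K), ((b 1 : W) : Fin 4 → K)} := by
    intro w hw
    have hsum := congrArg Subtype.val (b.sum_repr ⟨w, hw⟩)
    rw [Fin.sum_univ_two, Submodule.coe_add, Submodule.coe_smul, Submodule.coe_smul] at hsum
    exact Submodule.mem_span_pair.2 ⟨_, _, hsum⟩
  obtain ⟨u, a, hx⟩ := hsegre _ (b 0).2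
  obtain ⟨v, c, hy⟩ := hsegre _ (b 1).2
  have hx0 : segre u a ≠ 0 := hx ▸ fun h => b.ne_zero 0 (Subtype.ext h)
  rw [← hx, ← hy] at hspan
  have hcross : (u 0 * v 1 - u 1 * v 0) * (a 0 * c 1 - a 1 * c 0) = 0 := by
    have := hiso _ (W.add_mem (b 0).2 (b 1).2)
    rw [← hx, ← hy, segre_add_segre_dotProduct_segreForm_mulVec] at this
    exact (mul_eq_zero.1 this).resolve_left h2
  rcases mul_eq_zero.1 hcross with h | h
  · exact Or.inl ⟨u, (eq_range_of_le_span_of_cross_eq_zero segre hW hspan hx0 h).symm⟩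
  · exact Or.inr ⟨a, (eq_range_of_le_span_of_cross_eq_zero segre.flip hW hspan hx0 h).symm⟩

theorem eq_smul_segreForm_of_forall_segre (h2 : (2 : K) ≠ 0) {N : Matrix (Fin 4) (Fin 4) K}
    (hN : N.IsSymm) (h : ∀ u a, segre u a ⬝ᵥ N *ᵥ segre u a = 0) :
    N = N 0 3 • segreForm K := by
  have hsym : ∀ i j, N j i = N i j := fun i j => congrFun (congrFun hN i) j
  have e : ∀ u₀ u₁ a₀ a₁ : K,
      segre ![u₀, u₁] ![a₀, a₁] ⬝ᵥ N *ᵥ segre ![u₀, u₁] ![a₀, a₁] = 0 := fun _ _ _ _ => h _ _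
  simp only [segre_apply, dotProduct, mulVec, Fin.sum_univ_four, Matrix.cons_val] at e
  -- `u, a ∈ {e₀, e₁, e₀ + e₁}` give nine linear conditions, which pin down `N` up to scaling
  have := e 1 0 1 0; have := e 1 0 0 1; have := e 0 1 1 0; have := e 0 1 0 1
  have := e 1 0 1 1; have := e 1 1 1 0; have := e 1 1 0 1; have := e 0 1 1 1; have := e 1 1 1 1
  ext i j
  fin_cases i <;> fin_cases j <;> simp [segreForm] <;> grind

theorem encard_quadricLines_segreForm_inter_le_four (h2 : (2 : K) ≠ 0)
    {N : Matrix (Fin 4) (Fin 4) K} (hN : N.IsSymm) (hprop : ∀ c : K, N ≠ c • segreForm K) :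
    ((segreForm K).quadricLines ∩ N.quadricLines).encard ≤ 4 := by
  obtain ⟨u, a, hua⟩ : ∃ u a, segre u a ⬝ᵥ N *ᵥ segre u a ≠ 0 := by
    by_contra! h
    exact hprop _ (eq_smul_segreForm_of_forall_segre h2 hN h)
  calc ((segreForm K).quadricLines ∩ N.quadricLines).encard
      ≤ (N.quadricLines ∩ Set.range fun u => LinearMap.range (segre u)).encard +
        (N.quadricLines ∩ Set.range fun a => LinearMap.range (segre.flip a)).encard := by
        refine (Set.encard_le_encard fun W hW => ?_).trans (Set.encard_union_le _ _)
        rcases quadricLines_segreForm_subset h2 hW.1 with hcol | hrow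
        exacts [Or.inl ⟨hW.2, hcol⟩, Or.inr ⟨hW.2, hrow⟩]
    _ ≤ 2 + 2 := add_le_add (encard_quadricLines_inter_range_le_two _ N ⟨u, a, hua⟩)
        (encard_quadricLines_inter_range_le_two _ N ⟨a, u, hua⟩)
    _ = 4 := by norm_num

end

theorem stmt15_general {K : Type*} [Field K] [IsAlgClosed K] (h2 : (2 : K) ≠ 0)
    (M₁ M₂ : Matrix (Fin 4) (Fin 4) K)
    (hs₁ : M₁ᵀ = M₁) (hs₂ : M₂ᵀ = M₂)
    (hd₁ : M₁.det ≠ 0)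
    (hprop : ¬ ∃ c : K, M₂ = c • M₁) :
    {W : Submodule K (Fin 4 → K) | Module.finrank K W = 2 ∧
      ∀ v ∈ W, v ⬝ᵥ M₁.mulVec v = 0 ∧ v ⬝ᵥ M₂.mulVec v = 0}.ncard ≤ 4 := by
  obtain ⟨P, hP, hPM₁⟩ := M₁.exists_transpose_mul_mul_eq h2 hs₁ hd₁ segreForm_isSymm
    (by rw [det_segreForm]; exact one_ne_zero)
  have hN : (Pᵀ * M₂ * P).IsSymm := by
    simp only [IsSymm, transpose_mul, transpose_transpose, hs₂, Matrix.mul_assoc]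
  have hNprop : ∀ c : K, Pᵀ * M₂ * P ≠ c • segreForm K := fun c hc =>
    hprop ⟨c, (transpose_mul_mul_inj hP).1 (by rw [hc, ← hPM₁, Matrix.mul_smul, Matrix.smul_mul])⟩
  rw [← quadricLines_inter_quadricLines]
  refine (Set.encard_le_coe_iff_finite_ncard_le.1 ?_).2
  calc (M₁.quadricLines ∩ M₂.quadricLines).encard
      ≤ ((Pᵀ * M₁ * P).quadricLines ∩ (Pᵀ * M₂ * P).quadricLines).encard :=
        encard_quadricLines_inter_le M₁ M₂ P hP
    _ ≤ 4 := hPM₁ ▸ encard_quadricLines_segreForm_inter_le_four h2 hN hNprop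

/-- Let `Q₁(v) = v ⬝ᵥ M₁ v` and `Q₂(v) = v ⬝ᵥ M₂ v` be nondegenerate quadratic forms on a
4-dimensional vector space over an algebraically closed field of characteristic ≠ 2, with
non-proportional associated quadric surfaces in `ℙ³`.  Then the intersection of the two
quadrics contains at most 4 projective lines, i.e. the set of 2-dimensional subspaces on
which both forms vanish identically has at most 4 elements. -/
theorem stmt15 {K : Type*} [Field K] [IsAlgClosed K] (h2 : (2 : K) ≠ 0)
    (M₁ M₂ : Matrix (Fin 4) (Fin 4) K)
    (hs₁ : M₁ᵀ = M₁) (hs₂ : M₂ᵀ = M₂)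
    (hd₁ : M₁.det ≠ 0) (hd₂ : M₂.det ≠ 0)
    (hprop : ¬ ∃ c : K, M₂ = c • M₁) :
    {W : Submodule K (Fin 4 → K) | Module.finrank K W = 2 ∧
      ∀ v ∈ W, v ⬝ᵥ M₁.mulVec v = 0 ∧ v ⬝ᵥ M₂.mulVec v = 0}.ncard ≤ 4 :=
  stmt15_general h2 M₁ M₂ hs₁ hs₂ hd₁ hprop
end

section
/- Let c be a symmetric bilinear form on ℝ³ (with unknown 6 coefficients) and let θ(λ) = (α(λ), β(λ), 1) ∈ ℝ³ be a smooth curve of covectors with α'β'' − α''β' ≠ 0 at λ₀ (where c acts on covectors via a dual form). If the dual form c* satisfies c*(θ(λ)) = 0 for all λ in a neighborhood of λ₀, then c* is determined up to scale by the 5 linear conditions obtained from c*(θ(λ₀)) = 0 and its first four λ-derivatives at λ₀; i.e., the solution space of these 5 linear equations in the 6 coefficients of c* is at most 1-dimensional. -/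
open Matrix

set_option maxHeartbeats 4000000
set_option maxRecDepth 100000

def Vp0 (A0 A1 A2 A3 A4 B0 B1 B2 B3 B4 : ℝ) : ℝ := -4*A3^2*B1^4 + 3*A2*A4*B1^4 + 6*A2*A3*B1^3*B2 + 9*A2^2*B1^2*B2^2 - 12*A2^2*B1^3*B3 - 3*A1*A4*B1^3*B2 - 6*A1*A3*B1^2*B2^2 + 8*A1*A3*B1^3*B3 - 18*A1*A2*B1*B2^3 + 18*A1*A2*B1^2*B2*B3 - 3*A1*A2*B1^3*B4 + 9*A1^2*B2^4 - 6*A1^2*B1*B2^2*B3 - 4*A1^2*B1^2*B3^2 + 3*A1^2*B1^2*B2*B4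
def Vp1 (A0 A1 A2 A3 A4 B0 B1 B2 B3 B4 : ℝ) : ℝ := 3*A2^2*A3*B1^3 - 9*A2^3*B1^2*B2 + 4*A1*A3^2*B1^3 - 3*A1*A2*A4*B1^3 - 12*A1*A2*A3*B1^2*B2 + 18*A1*A2^2*B1*B2^2 + 9*A1*A2^2*B1^2*B3 + 3*A1^2*A4*B1^2*B2 + 9*A1^2*A3*B1*B2^2 - 8*A1^2*A3*B1^2*B3 - 9*A1^2*A2*B2^3 - 12*A1^2*A2*B1*B2*B3 + 3*A1^2*A2*B1^2*B4 + 3*A1^3*B2^2*B3 + 4*A1^3*B1*B3^2 - 3*A1^3*B1*B2*B4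
def Vp2 (A0 A1 A2 A3 A4 B0 B1 B2 B3 B4 : ℝ) : ℝ := -3*A2^2*A3*B0*B1^3 - 9*A2^3*B1^4 + 9*A2^3*B0*B1^2*B2 - 4*A1*A3^2*B0*B1^3 + 3*A1*A2*A4*B0*B1^3 + 12*A1*A2*A3*B0*B1^2*B2 + 27*A1*A2^2*B1^3*B2 - 18*A1*A2^2*B0*B1*B2^2 - 9*A1*A2^2*B0*B1^2*B3 - 3*A1^2*A4*B0*B1^2*B2 - 9*A1^2*A3*B0*B1*B2^2 + 8*A1^2*A3*B0*B1^2*B3 - 27*A1^2*A2*B1^2*B2^2 + 9*A1^2*A2*B0*B2^3 + 12*A1^2*A2*B0*B1*B2*B3 - 3*A1^2*A2*B0*B1^2*B4 + 9*A1^3*B1*B2^3 - 3*A1^3*B0*B2^2*B3 - 4*A1^3*B0*B1*B3^2 + 3*A1^3*B0*B1*B2*B4 + 4*A0*A3^2*B1^4 - 3*A0*A2*A4*B1^4 - 6*A0*A2*A3*B1^3*B2 - 9*A0*A2^2*B1^2*B2^2 + 12*A0*A2^2*B1^3*B3 + 3*A0*A1*A4*B1^3*B2 + 6*A0*A1*A3*B1^2*B2^2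 - 8*A0*A1*A3*B1^3*B3 + 18*A0*A1*A2*B1*B2^3 - 18*A0*A1*A2*B1^2*B2*B3 + 3*A0*A1*A2*B1^3*B4 - 9*A0*A1^2*B2^4 + 6*A0*A1^2*B1*B2^2*B3 + 4*A0*A1^2*B1^2*B3^2 - 3*A0*A1^2*B1^2*B2*B4
def Vp3 (A0 A1 A2 A3 A4 B0 B1 B2 B3 B4 : ℝ) : ℝ := 9*A2^4*B1^2 - 6*A1*A2^2*A3*B1^2 - 18*A1*A2^3*B1*B2 - 4*A1^2*A3^2*B1^2 + 3*A1^2*A2*A4*B1^2 + 18*A1^2*A2*A3*B1*B2 + 9*A1^2*A2^2*B2^2 - 6*A1^2*A2^2*B1*B3 - 3*A1^3*A4*B1*B2 - 12*A1^3*A3*B2^2 + 8*A1^3*A3*B1*B3 + 6*A1^3*A2*B2*B3 - 3*A1^3*A2*B1*B4 - 4*A1^4*B3^2 + 3*A1^4*B2*B4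
def Vp4 (A0 A1 A2 A3 A4 B0 B1 B2 B3 B4 : ℝ) : ℝ := -9*A2^4*B0*B1^2 + 6*A1*A2^2*A3*B0*B1^2 + 9*A1*A2^3*B1^3 + 18*A1*A2^3*B0*B1*B2 + 4*A1^2*A3^2*B0*B1^2 - 3*A1^2*A2*A4*B0*B1^2 - 18*A1^2*A2*A3*B0*B1*B2 - 27*A1^2*A2^2*B1^2*B2 - 9*A1^2*A2^2*B0*B2^2 + 6*A1^2*A2^2*B0*B1*B3 + 3*A1^3*A4*B0*B1*B2 + 12*A1^3*A3*B0*B2^2 - 8*A1^3*A3*B0*B1*B3 + 27*A1^3*A2*B1*B2^2 - 6*A1^3*A2*B0*B2*B3 + 3*A1^3*A2*B0*B1*B4 - 9*A1^4*B2^3 + 4*A1^4*B0*B3^2 - 3*A1^4*B0*B2*B4 - 3*A0*A2^2*A3*B1^3 + 9*A0*A2^3*B1^2*B2 - 4*A0*A1*A3^2*B1^3 + 3*A0*A1*A2*A4*B1^3 + 12*A0*A1*A2*A3*B1^2*B2 - 18*A0*A1*A2^2*B1*B2^2 - 9*A0*A1*A2^2*B1^2*B3 - 3*A0*A1^2*A4*B1^2*B2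 - 9*A0*A1^2*A3*B1*B2^2 + 8*A0*A1^2*A3*B1^2*B3 + 9*A0*A1^2*A2*B2^3 + 12*A0*A1^2*A2*B1*B2*B3 - 3*A0*A1^2*A2*B1^2*B4 - 3*A0*A1^3*B2^2*B3 - 4*A0*A1^3*B1*B3^2 + 3*A0*A1^3*B1*B2*B4
def Vp5 (A0 A1 A2 A3 A4 B0 B1 B2 B3 B4 : ℝ) : ℝ := 9*A2^4*B0^2*B1^2 - 6*A1*A2^2*A3*B0^2*B1^2 - 18*A1*A2^3*B0*B1^3 - 18*A1*A2^3*B0^2*B1*B2 - 4*A1^2*A3^2*B0^2*B1^2 + 3*A1^2*A2*A4*B0^2*B1^2 + 18*A1^2*A2*A3*B0^2*B1*B2 + 54*A1^2*A2^2*B0*B1^2*B2 + 9*A1^2*A2^2*B0^2*B2^2 - 6*A1^2*A2^2*B0^2*B1*B3 - 3*A1^3*A4*B0^2*B1*B2 - 12*A1^3*A3*B0^2*B2^2 + 8*A1^3*A3*B0^2*B1*B3 - 54*A1^3*A2*B0*B1*B2^2 + 6*A1^3*A2*B0^2*B2*B3 - 3*A1^3*A2*B0^2*B1*B4 + 18*A1^4*B0*B2^3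 - 4*A1^4*B0^2*B3^2 + 3*A1^4*B0^2*B2*B4 + 6*A0*A2^2*A3*B0*B1^3 + 18*A0*A2^3*B1^4 - 18*A0*A2^3*B0*B1^2*B2 + 8*A0*A1*A3^2*B0*B1^3 - 6*A0*A1*A2*A4*B0*B1^3 - 24*A0*A1*A2*A3*B0*B1^2*B2 - 54*A0*A1*A2^2*B1^3*B2 + 36*A0*A1*A2^2*B0*B1*B2^2 + 18*A0*A1*A2^2*B0*B1^2*B3 + 6*A0*A1^2*A4*B0*B1^2*B2 + 18*A0*A1^2*A3*B0*B1*B2^2 - 16*A0*A1^2*A3*B0*B1^2*B3 + 54*A0*A1^2*A2*B1^2*B2^2 - 18*A0*A1^2*A2*B0*B2^3 - 24*A0*A1^2*A2*B0*B1*B2*B3 + 6*A0*A1^2*A2*B0*B1^2*B4 - 18*A0*A1^3*B1*B2^3 + 6*A0*A1^3*B0*B2^2*B3 + 8*A0*A1^3*B0*B1*B3^2 - 6*A0*A1^3*B0*B1*B2*B4 - 4*A0^2*A3^2*B1^4 + 3*A0^2*A2*A4*B1^4 + 6*A0^2*A2*A3*B1^3*B2 + 9*A0^2*A2^2*B1^2*B2^2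 - 12*A0^2*A2^2*B1^3*B3 - 3*A0^2*A1*A4*B1^3*B2 - 6*A0^2*A1*A3*B1^2*B2^2 + 8*A0^2*A1*A3*B1^3*B3 - 18*A0^2*A1*A2*B1*B2^3 + 18*A0^2*A1*A2*B1^2*B2*B3 - 3*A0^2*A1*A2*B1^3*B4 + 9*A0^2*A1^2*B2^4 - 6*A0^2*A1^2*B1*B2^2*B3 - 4*A0^2*A1^2*B1^2*B3^2 + 3*A0^2*A1^2*B1^2*B2*B4

set_option maxHeartbeats 4000000 in
set_option maxRecDepth 100000 in
theorem alg17 (A0 A1 A2 A3 A4 B0 B1 B2 B3 B4 m0 m1 m2 m3 m4 m5 : ℝ)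
    (e0 : m5 + 2*B0*m4 + B0^2*m3 + 2*A0*m2 + 2*A0*B0*m1 + A0^2*m0 = 0)
    (e1 : 2*B1*m4 + 2*B0*B1*m3 + 2*A1*m2 + 2*A1*B0*m1 + 2*A0*B1*m1 + 2*A0*A1*m0 = 0)
    (e2 : 2*B2*m4 + 2*B1^2*m3 + 2*B0*B2*m3 + 2*A2*m2 + 2*A2*B0*m1 + 4*A1*B1*m1 + 2*A1^2*m0 + 2*A0*B2*m1 + 2*A0*A2*m0 = 0)
    (e3 : 2*B3*m4 + 6*B1*B2*m3 + 2*B0*B3*m3 + 2*A3*m2 + 2*A3*B0*m1 + 6*A2*B1*m1 + 6*A1*B2*m1 + 6*A1*A2*m0 + 2*A0*B3*m1 + 2*A0*A3*m0 = 0)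
    (e4 : 2*B4*m4 + 6*B2^2*m3 + 8*B1*B3*m3 + 2*B0*B4*m3 + 2*A4*m2 + 2*A4*B0*m1 + 8*A3*B1*m1 + 12*A2*B2*m1 + 6*A2^2*m0 + 8*A1*B3*m1 + 8*A1*A3*m0 + 2*A0*B4*m1 + 2*A0*A4*m0 = 0) :
    (9*(A1*B2-A2*B1)^4*m0 = (m0*A1^2+2*m1*A1*B1+m3*B1^2) * Vp0 A0 A1 A2 A3 A4 B0 B1 B2 B3 B4) ∧ (9*(A1*B2-A2*B1)^4*m1 = (m0*A1^2+2*m1*A1*B1+m3*B1^2) * Vp1 A0 A1 A2 A3 A4 B0 B1 B2 B3 B4) ∧ (9*(A1*B2-A2*B1)^4*m2 = (m0*A1^2+2*m1*A1*B1+m3*B1^2) * Vp2 A0 A1 A2 A3 A4 B0 B1 B2 B3 B4) ∧ (9*(A1*B2-A2*B1)^4*m3 = (m0*A1^2+2*m1*A1*B1+m3*B1^2) * Vp3 A0 A1 A2 A3 A4 B0 B1 B2 B3 B4) ∧ (9*(A1*B2-A2*B1)^4*m4 = (m0*A1^2+2*m1*A1*B1+m3*B1^2) * Vp4 A0 A1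 A2 A3 A4 B0 B1 B2 B3 B4) ∧ (9*(A1*B2-A2*B1)^4*m5 = (m0*A1^2+2*m1*A1*B1+m3*B1^2) * Vp5 A0 A1 A2 A3 A4 B0 B1 B2 B3 B4) := by
  simp only [Vp0, Vp1, Vp2, Vp3, Vp4, Vp5]
  refine ⟨?_, ?_, ?_, ?_, ?_, ?_⟩
  · linear_combination (0) * e0 + (-2*A3^2*B1^3*B2 + (3/2)*A2*A4*B1^3*B2 - 3*A2*A3*B1^2*B2^2 + 2*A2*A3*B1^3*B3 + 3*A2^2*B1^2*B2*B3 + (-3/2)*A2^2*B1^3*B4 + (-3/2)*A1*A4*B1^2*B2^2 + 3*A1*A3*B1*B2^3 + 2*A1*A3*B1^2*B2*B3 - 3*A1*A2*B1*B2^2*B3 - 2*A1*A2*B1^2*B3^2 + (3/2)*A1*A2*B1^2*B2*B4) * e1 + (2*A3^2*B1^4 + (-3/2)*A2*A4*B1^4 + 3*A2*A3*B1^3*B2 + (3/2)*A1*A4*B1^3*B2 - 3*A1*A3*B1^2*B2^2 - 4*A1*A3*B1^3*B3 - 3*A1*A2*B1^2*B2*B3 + (3/2)*A1*A2*B1^3*B4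 + 3*A1^2*B1*B2^2*B3 + 2*A1^2*B1^2*B3^2 + (-3/2)*A1^2*B1^2*B2*B4) * e2 + (-2*A2*A3*B1^4 - 3*A2^2*B1^3*B2 + 2*A1*A3*B1^3*B2 + 6*A1*A2*B1^2*B2^2 + 2*A1*A2*B1^3*B3 - 3*A1^2*B1*B2^3 - 2*A1^2*B1^2*B2*B3) * e3 + ((3/2)*A2^2*B1^4 - 3*A1*A2*B1^3*B2 + (3/2)*A1^2*B1^2*B2^2) * e4
  · linear_combination (0) * e0 + ((3/2)*A2^2*A3*B1^2*B2 + (-3/2)*A2^3*B1^2*B3 + 2*A1*A3^2*B1^2*B2 + (-3/2)*A1*A2*A4*B1^2*B2 - 2*A1*A2*A3*B1^2*B3 + (3/2)*A1*A2^2*B1^2*B4 + (3/2)*A1^2*A4*B1*B2^2 + (-3/2)*A1^2*A3*B2^3 - 2*A1^2*A3*B1*B2*B3 + (3/2)*A1^2*A2*B2^2*B3 + 2*A1^2*A2*B1*B3^2 + (-3/2)*A1^2*A2*B1*B2*B4) * e1 + ((-3/2)*A2^2*A3*B1^3 - 2*A1*A3^2*B1^3 + (3/2)*A1*A2*A4*B1^3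 + (3/2)*A1*A2^2*B1^2*B3 + (-3/2)*A1^2*A4*B1^2*B2 + (3/2)*A1^2*A3*B1*B2^2 + 4*A1^2*A3*B1^2*B3 + (-3/2)*A1^2*A2*B1^2*B4 + (-3/2)*A1^3*B2^2*B3 - 2*A1^3*B1*B3^2 + (3/2)*A1^3*B1*B2*B4) * e2 + ((3/2)*A2^3*B1^3 + 2*A1*A2*A3*B1^3 + (-3/2)*A1*A2^2*B1^2*B2 - 2*A1^2*A3*B1^2*B2 + (-3/2)*A1^2*A2*B1*B2^2 - 2*A1^2*A2*B1^2*B3 + (3/2)*A1^3*B2^3 + 2*A1^3*B1*B2*B3) * e3 + ((-3/2)*A1*A2^2*B1^3 + 3*A1^2*A2*B1^2*B2 + (-3/2)*A1^3*B1*B2^2) * e4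
  · linear_combination (0) * e0 + ((-3/2)*A2^2*A3*B0*B1^2*B2 + (-9/2)*A2^3*B1^3*B2 + (3/2)*A2^3*B0*B1^2*B3 - 2*A1*A3^2*B0*B1^2*B2 + (3/2)*A1*A2*A4*B0*B1^2*B2 + 2*A1*A2*A3*B0*B1^2*B3 + (27/2)*A1*A2^2*B1^2*B2^2 + (-3/2)*A1*A2^2*B0*B1^2*B4 + (-3/2)*A1^2*A4*B0*B1*B2^2 + (3/2)*A1^2*A3*B0*B2^3 + 2*A1^2*A3*B0*B1*B2*B3 + (-27/2)*A1^2*A2*B1*B2^3 + (-3/2)*A1^2*A2*B0*B2^2*B3 - 2*A1^2*A2*B0*B1*B3^2 + (3/2)*A1^2*A2*B0*B1*B2*B4 + (9/2)*A1^3*B2^4 + 2*A0*A3^2*B1^3*B2 + (-3/2)*A0*A2*A4*B1^3*B2 + 3*A0*A2*A3*B1^2*B2^2 - 2*A0*A2*A3*B1^3*B3 - 3*A0*A2^2*B1^2*B2*B3 + (3/2)*A0*A2^2*B1^3*B4 + (3/2)*A0*A1*A4*B1^2*B2^2 - 3*A0*A1*A3*B1*B2^3 - 2*A0*A1*A3*B1^2*B2*B3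 + 3*A0*A1*A2*B1*B2^2*B3 + 2*A0*A1*A2*B1^2*B3^2 + (-3/2)*A0*A1*A2*B1^2*B2*B4) * e1 + ((3/2)*A2^2*A3*B0*B1^3 + (9/2)*A2^3*B1^4 + 2*A1*A3^2*B0*B1^3 + (-3/2)*A1*A2*A4*B0*B1^3 + (-27/2)*A1*A2^2*B1^3*B2 + (-3/2)*A1*A2^2*B0*B1^2*B3 + (3/2)*A1^2*A4*B0*B1^2*B2 + (-3/2)*A1^2*A3*B0*B1*B2^2 - 4*A1^2*A3*B0*B1^2*B3 + (27/2)*A1^2*A2*B1^2*B2^2 + (3/2)*A1^2*A2*B0*B1^2*B4 + (-9/2)*A1^3*B1*B2^3 + (3/2)*A1^3*B0*B2^2*B3 + 2*A1^3*B0*B1*B3^2 + (-3/2)*A1^3*B0*B1*B2*B4 - 2*A0*A3^2*B1^4 + (3/2)*A0*A2*A4*B1^4 - 3*A0*A2*A3*B1^3*B2 + (-3/2)*A0*A1*A4*B1^3*B2 + 3*A0*A1*A3*B1^2*B2^2 + 4*A0*A1*A3*B1^3*B3 + 3*A0*A1*A2*B1^2*B2*B3 + (-3/2)*A0*A1*A2*B1^3*B4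 - 3*A0*A1^2*B1*B2^2*B3 - 2*A0*A1^2*B1^2*B3^2 + (3/2)*A0*A1^2*B1^2*B2*B4) * e2 + ((-3/2)*A2^3*B0*B1^3 - 2*A1*A2*A3*B0*B1^3 + (3/2)*A1*A2^2*B0*B1^2*B2 + 2*A1^2*A3*B0*B1^2*B2 + (3/2)*A1^2*A2*B0*B1*B2^2 + 2*A1^2*A2*B0*B1^2*B3 + (-3/2)*A1^3*B0*B2^3 - 2*A1^3*B0*B1*B2*B3 + 2*A0*A2*A3*B1^4 + 3*A0*A2^2*B1^3*B2 - 2*A0*A1*A3*B1^3*B2 - 6*A0*A1*A2*B1^2*B2^2 - 2*A0*A1*A2*B1^3*B3 + 3*A0*A1^2*B1*B2^3 + 2*A0*A1^2*B1^2*B2*B3) * e3 + ((3/2)*A1*A2^2*B0*B1^3 - 3*A1^2*A2*B0*B1^2*B2 + (3/2)*A1^3*B0*B1*B2^2 + (-3/2)*A0*A2^2*B1^4 + 3*A0*A1*A2*B1^3*B2 + (-3/2)*A0*A1^2*B1^2*B2^2) * e4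
  · linear_combination (0) * e0 + (-3*A1*A2^2*A3*B1*B2 + 3*A1*A2^3*B1*B3 - 2*A1^2*A3^2*B1*B2 + (3/2)*A1^2*A2*A4*B1*B2 + 3*A1^2*A2*A3*B2^2 + 2*A1^2*A2*A3*B1*B3 - 3*A1^2*A2^2*B2*B3 + (-3/2)*A1^2*A2^2*B1*B4 + (-3/2)*A1^3*A4*B2^2 + 2*A1^3*A3*B2*B3 - 2*A1^3*A2*B3^2 + (3/2)*A1^3*A2*B2*B4) * e1 + (3*A1*A2^2*A3*B1^2 + 2*A1^2*A3^2*B1^2 + (-3/2)*A1^2*A2*A4*B1^2 - 3*A1^2*A2*A3*B1*B2 - 3*A1^2*A2^2*B1*B3 + (3/2)*A1^3*A4*B1*B2 - 4*A1^3*A3*B1*B3 + 3*A1^3*A2*B2*B3 + (3/2)*A1^3*A2*B1*B4 + 2*A1^4*B3^2 + (-3/2)*A1^4*B2*B4) * e2 + (-3*A1*A2^3*B1^2 - 2*A1^2*A2*A3*B1^2 + 6*A1^2*A2^2*B1*B2 + 2*A1^3*A3*B1*B2 - 3*A1^3*A2*B2^2 + 2*A1^3*A2*B1*B3 - 2*A1^4*B2*B3)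 * e3 + ((3/2)*A1^2*A2^2*B1^2 - 3*A1^3*A2*B1*B2 + (3/2)*A1^4*B2^2) * e4
  · linear_combination (0) * e0 + ((9/2)*A2^4*B1^3 + 3*A1*A2^2*A3*B0*B1*B2 + (-27/2)*A1*A2^3*B1^2*B2 - 3*A1*A2^3*B0*B1*B3 + 2*A1^2*A3^2*B0*B1*B2 + (-3/2)*A1^2*A2*A4*B0*B1*B2 - 3*A1^2*A2*A3*B0*B2^2 - 2*A1^2*A2*A3*B0*B1*B3 + (27/2)*A1^2*A2^2*B1*B2^2 + 3*A1^2*A2^2*B0*B2*B3 + (3/2)*A1^2*A2^2*B0*B1*B4 + (3/2)*A1^3*A4*B0*B2^2 - 2*A1^3*A3*B0*B2*B3 + (-9/2)*A1^3*A2*B2^3 + 2*A1^3*A2*B0*B3^2 + (-3/2)*A1^3*A2*B0*B2*B4 + (-3/2)*A0*A2^2*A3*B1^2*B2 + (3/2)*A0*A2^3*B1^2*B3 - 2*A0*A1*A3^2*B1^2*B2 + (3/2)*A0*A1*A2*A4*B1^2*B2 + 2*A0*A1*A2*A3*B1^2*B3 + (-3/2)*A0*A1*A2^2*B1^2*B4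 + (-3/2)*A0*A1^2*A4*B1*B2^2 + (3/2)*A0*A1^2*A3*B2^3 + 2*A0*A1^2*A3*B1*B2*B3 + (-3/2)*A0*A1^2*A2*B2^2*B3 - 2*A0*A1^2*A2*B1*B3^2 + (3/2)*A0*A1^2*A2*B1*B2*B4) * e1 + (-3*A1*A2^2*A3*B0*B1^2 + (-9/2)*A1*A2^3*B1^3 - 2*A1^2*A3^2*B0*B1^2 + (3/2)*A1^2*A2*A4*B0*B1^2 + 3*A1^2*A2*A3*B0*B1*B2 + (27/2)*A1^2*A2^2*B1^2*B2 + 3*A1^2*A2^2*B0*B1*B3 + (-3/2)*A1^3*A4*B0*B1*B2 + 4*A1^3*A3*B0*B1*B3 + (-27/2)*A1^3*A2*B1*B2^2 - 3*A1^3*A2*B0*B2*B3 + (-3/2)*A1^3*A2*B0*B1*B4 + (9/2)*A1^4*B2^3 - 2*A1^4*B0*B3^2 + (3/2)*A1^4*B0*B2*B4 + (3/2)*A0*A2^2*A3*B1^3 + 2*A0*A1*A3^2*B1^3 + (-3/2)*A0*A1*A2*A4*B1^3 + (-3/2)*A0*A1*A2^2*B1^2*B3 + (3/2)*A0*A1^2*A4*B1^2*B2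 + (-3/2)*A0*A1^2*A3*B1*B2^2 - 4*A0*A1^2*A3*B1^2*B3 + (3/2)*A0*A1^2*A2*B1^2*B4 + (3/2)*A0*A1^3*B2^2*B3 + 2*A0*A1^3*B1*B3^2 + (-3/2)*A0*A1^3*B1*B2*B4) * e2 + (3*A1*A2^3*B0*B1^2 + 2*A1^2*A2*A3*B0*B1^2 - 6*A1^2*A2^2*B0*B1*B2 - 2*A1^3*A3*B0*B1*B2 + 3*A1^3*A2*B0*B2^2 - 2*A1^3*A2*B0*B1*B3 + 2*A1^4*B0*B2*B3 + (-3/2)*A0*A2^3*B1^3 - 2*A0*A1*A2*A3*B1^3 + (3/2)*A0*A1*A2^2*B1^2*B2 + 2*A0*A1^2*A3*B1^2*B2 + (3/2)*A0*A1^2*A2*B1*B2^2 + 2*A0*A1^2*A2*B1^2*B3 + (-3/2)*A0*A1^3*B2^3 - 2*A0*A1^3*B1*B2*B3) * e3 + ((-3/2)*A1^2*A2^2*B0*B1^2 + 3*A1^3*A2*B0*B1*B2 + (-3/2)*A1^4*B0*B2^2 + (3/2)*A0*A1*A2^2*B1^3 - 3*A0*A1^2*A2*B1^2*B2 + (3/2)*A0*A1^3*B1*B2^2)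 * e4
  · linear_combination (0 + 9*A2^4*B1^4 - 36*A1*A2^3*B1^3*B2 + 54*A1^2*A2^2*B1^2*B2^2 - 36*A1^3*A2*B1*B2^3 + 9*A1^4*B2^4) * e0 + (-9*A2^4*B0*B1^3 - 3*A1*A2^2*A3*B0^2*B1*B2 + 27*A1*A2^3*B0*B1^2*B2 + 3*A1*A2^3*B0^2*B1*B3 - 2*A1^2*A3^2*B0^2*B1*B2 + (3/2)*A1^2*A2*A4*B0^2*B1*B2 + 3*A1^2*A2*A3*B0^2*B2^2 + 2*A1^2*A2*A3*B0^2*B1*B3 - 27*A1^2*A2^2*B0*B1*B2^2 - 3*A1^2*A2^2*B0^2*B2*B3 + (-3/2)*A1^2*A2^2*B0^2*B1*B4 + (-3/2)*A1^3*A4*B0^2*B2^2 + 2*A1^3*A3*B0^2*B2*B3 + 9*A1^3*A2*B0*B2^3 - 2*A1^3*A2*B0^2*B3^2 + (3/2)*A1^3*A2*B0^2*B2*B4 + 3*A0*A2^2*A3*B0*B1^2*B2 + 9*A0*A2^3*B1^3*B2 - 3*A0*A2^3*B0*B1^2*B3 + 4*A0*A1*A3^2*B0*B1^2*B2 - 3*A0*A1*A2*A4*B0*B1^2*B2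 - 4*A0*A1*A2*A3*B0*B1^2*B3 - 27*A0*A1*A2^2*B1^2*B2^2 + 3*A0*A1*A2^2*B0*B1^2*B4 + 3*A0*A1^2*A4*B0*B1*B2^2 - 3*A0*A1^2*A3*B0*B2^3 - 4*A0*A1^2*A3*B0*B1*B2*B3 + 27*A0*A1^2*A2*B1*B2^3 + 3*A0*A1^2*A2*B0*B2^2*B3 + 4*A0*A1^2*A2*B0*B1*B3^2 - 3*A0*A1^2*A2*B0*B1*B2*B4 - 9*A0*A1^3*B2^4 - 2*A0^2*A3^2*B1^3*B2 + (3/2)*A0^2*A2*A4*B1^3*B2 - 3*A0^2*A2*A3*B1^2*B2^2 + 2*A0^2*A2*A3*B1^3*B3 + 3*A0^2*A2^2*B1^2*B2*B3 + (-3/2)*A0^2*A2^2*B1^3*B4 + (-3/2)*A0^2*A1*A4*B1^2*B2^2 + 3*A0^2*A1*A3*B1*B2^3 + 2*A0^2*A1*A3*B1^2*B2*B3 - 3*A0^2*A1*A2*B1*B2^2*B3 - 2*A0^2*A1*A2*B1^2*B3^2 + (3/2)*A0^2*A1*A2*B1^2*B2*B4) * e1 + (3*A1*A2^2*A3*B0^2*B1^2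 + 9*A1*A2^3*B0*B1^3 + 2*A1^2*A3^2*B0^2*B1^2 + (-3/2)*A1^2*A2*A4*B0^2*B1^2 - 3*A1^2*A2*A3*B0^2*B1*B2 - 27*A1^2*A2^2*B0*B1^2*B2 - 3*A1^2*A2^2*B0^2*B1*B3 + (3/2)*A1^3*A4*B0^2*B1*B2 - 4*A1^3*A3*B0^2*B1*B3 + 27*A1^3*A2*B0*B1*B2^2 + 3*A1^3*A2*B0^2*B2*B3 + (3/2)*A1^3*A2*B0^2*B1*B4 - 9*A1^4*B0*B2^3 + 2*A1^4*B0^2*B3^2 + (-3/2)*A1^4*B0^2*B2*B4 - 3*A0*A2^2*A3*B0*B1^3 - 9*A0*A2^3*B1^4 - 4*A0*A1*A3^2*B0*B1^3 + 3*A0*A1*A2*A4*B0*B1^3 + 27*A0*A1*A2^2*B1^3*B2 + 3*A0*A1*A2^2*B0*B1^2*B3 - 3*A0*A1^2*A4*B0*B1^2*B2 + 3*A0*A1^2*A3*B0*B1*B2^2 + 8*A0*A1^2*A3*B0*B1^2*B3 - 27*A0*A1^2*A2*B1^2*B2^2 - 3*A0*A1^2*A2*B0*B1^2*B4 + 9*A0*A1^3*B1*B2^3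 - 3*A0*A1^3*B0*B2^2*B3 - 4*A0*A1^3*B0*B1*B3^2 + 3*A0*A1^3*B0*B1*B2*B4 + 2*A0^2*A3^2*B1^4 + (-3/2)*A0^2*A2*A4*B1^4 + 3*A0^2*A2*A3*B1^3*B2 + (3/2)*A0^2*A1*A4*B1^3*B2 - 3*A0^2*A1*A3*B1^2*B2^2 - 4*A0^2*A1*A3*B1^3*B3 - 3*A0^2*A1*A2*B1^2*B2*B3 + (3/2)*A0^2*A1*A2*B1^3*B4 + 3*A0^2*A1^2*B1*B2^2*B3 + 2*A0^2*A1^2*B1^2*B3^2 + (-3/2)*A0^2*A1^2*B1^2*B2*B4) * e2 + (-3*A1*A2^3*B0^2*B1^2 - 2*A1^2*A2*A3*B0^2*B1^2 + 6*A1^2*A2^2*B0^2*B1*B2 + 2*A1^3*A3*B0^2*B1*B2 - 3*A1^3*A2*B0^2*B2^2 + 2*A1^3*A2*B0^2*B1*B3 - 2*A1^4*B0^2*B2*B3 + 3*A0*A2^3*B0*B1^3 + 4*A0*A1*A2*A3*B0*B1^3 - 3*A0*A1*A2^2*B0*B1^2*B2 - 4*A0*A1^2*A3*B0*B1^2*B2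 - 3*A0*A1^2*A2*B0*B1*B2^2 - 4*A0*A1^2*A2*B0*B1^2*B3 + 3*A0*A1^3*B0*B2^3 + 4*A0*A1^3*B0*B1*B2*B3 - 2*A0^2*A2*A3*B1^4 - 3*A0^2*A2^2*B1^3*B2 + 2*A0^2*A1*A3*B1^3*B2 + 6*A0^2*A1*A2*B1^2*B2^2 + 2*A0^2*A1*A2*B1^3*B3 - 3*A0^2*A1^2*B1*B2^3 - 2*A0^2*A1^2*B1^2*B2*B3) * e3 + ((3/2)*A1^2*A2^2*B0^2*B1^2 - 3*A1^3*A2*B0^2*B1*B2 + (3/2)*A1^4*B0^2*B2^2 - 3*A0*A1*A2^2*B0*B1^3 + 6*A0*A1^2*A2*B0*B1^2*B2 - 3*A0*A1^3*B0*B1*B2^2 + (3/2)*A0^2*A2^2*B1^4 - 3*A0^2*A1*A2*B1^3*B2 + (3/2)*A0^2*A1^2*B1^2*B2^2) * e4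

theorem derivs17 (α β : ℝ → ℝ) (hα : ContDiff ℝ (⊤ : ℕ∞) α) (hβ : ContDiff ℝ (⊤ : ℕ∞) β)
    (m0 m1 m2 m3 m4 m5 : ℝ) (l₀ : ℝ)
    (h : ∀ k ≤ 4, iteratedDeriv k (fun l => m0*(α l*α l) + 2*m1*(α l*β l) + m3*(β l*β l) + 2*m2*α l + 2*m4*β l + m5) l₀ = 0) :
    (m0*(α l₀*α l₀) + 2*m1*(α l₀*β l₀) + m3*(β l₀*β l₀) + 2*m2*α l₀ + 2*m4*β l₀ + m5 = 0) ∧ (2*m0*(α l₀*iteratedDeriv 1 α l₀) + 2*m1*(iteratedDeriv 1 α l₀*β l₀ + α l₀*iteratedDeriv 1 β l₀) + 2*m3*(β l₀*iteratedDeriv 1 β l₀) + 2*m2*iteratedDeriv 1 α l₀ + 2*m4*iteratedDeriv 1 β l₀ = 0) ∧ (2*m0*(iteratedDeriv 1 α l₀*iteratedDeriv 1 α l₀ + α l₀*iteratedDeriv 2 α l₀) + 2*m1*(iteratedDeriv 2 α l₀*β l₀ + 2*(iteratedDeriv 1 α l₀*iteratedDeriv 1 β l₀) + α l₀*iteratedDeriv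 2 β l₀) + 2*m3*(iteratedDeriv 1 β l₀*iteratedDeriv 1 β l₀ + β l₀*iteratedDeriv 2 β l₀) + 2*m2*iteratedDeriv 2 α l₀ + 2*m4*iteratedDeriv 2 β l₀ = 0) ∧ (2*m0*(3*(iteratedDeriv 1 α l₀*iteratedDeriv 2 α l₀) + α l₀*iteratedDeriv 3 α l₀) + 2*m1*(iteratedDeriv 3 α l₀*β l₀ + 3*(iteratedDeriv 2 α l₀*iteratedDeriv 1 β l₀) + 3*(iteratedDeriv 1 α l₀*iteratedDeriv 2 β l₀) + α l₀*iteratedDeriv 3 β l₀) + 2*m3*(3*(iteratedDeriv 1 β l₀*iteratedDeriv 2 β l₀) + β l₀*iteratedDeriv 3 β l₀) + 2*m2*iteratedDeriv 3 α l₀ + 2*m4*iteratedDeriv 3 β l₀ = 0) ∧ (2*m0*(3*(iteratedDeriv 2 α l₀*iteratedDeriv 2 α l₀) + 4*(iteratedDeriv 1 α l₀*iteratedDeriv 3 α l₀) + α l₀*iteratedDeriv 4 α l₀) + 2*m1*(iteratedDeriv 4 α l₀*β l₀ + 4*(iteratedDeriv 3 α l₀*iteratedDeriv 1 β l₀) +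 6*(iteratedDeriv 2 α l₀*iteratedDeriv 2 β l₀) + 4*(iteratedDeriv 1 α l₀*iteratedDeriv 3 β l₀) + α l₀*iteratedDeriv 4 β l₀) + 2*m3*(3*(iteratedDeriv 2 β l₀*iteratedDeriv 2 β l₀) + 4*(iteratedDeriv 1 β l₀*iteratedDeriv 3 β l₀) + β l₀*iteratedDeriv 4 β l₀) + 2*m2*iteratedDeriv 4 α l₀ + 2*m4*iteratedDeriv 4 β l₀ = 0) := by
  have HA : ∀ (n : ℕ) (l : ℝ), HasDerivAt (iteratedDeriv n α) (iteratedDeriv (n+1) α l) l := by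
    intro n l
    rw [iteratedDeriv_succ]
    exact ((hα.differentiable_iteratedDeriv n (by exact_mod_cast ENat.coe_lt_top n)) l).hasDerivAt
  have HB : ∀ (n : ℕ) (l : ℝ), HasDerivAt (iteratedDeriv n β) (iteratedDeriv (n+1) β l) l := by
    intro n l
    rw [iteratedDeriv_succ]
    exact ((hβ.differentiable_iteratedDeriv n (by exact_mod_cast ENat.coe_lt_top n)) l).hasDerivAt
  have HA0 : ∀ l, HasDerivAt α (iteratedDeriv 1 α l) l := by
    intro l; have := HA 0 l; rwa [iteratedDeriv_zero] at this
  have HB0 : ∀ l, HasDerivAt β (iteratedDeriv 1 β l) l := by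
    intro l; have := HB 0 l; rwa [iteratedDeriv_zero] at this
  have HA1 : ∀ l, HasDerivAt (iteratedDeriv 1 α) (iteratedDeriv 2 α l) l := fun l => HA 1 l
  have HB1 : ∀ l, HasDerivAt (iteratedDeriv 1 β) (iteratedDeriv 2 β l) l := fun l => HB 1 l
  have HA2 : ∀ l, HasDerivAt (iteratedDeriv 2 α) (iteratedDeriv 3 α l) l := fun l => HA 2 l
  have HB2 : ∀ l, HasDerivAt (iteratedDeriv 2 β) (iteratedDeriv 3 β l) l := fun l => HB 2 l
  have HA3 : ∀ l, HasDerivAt (iteratedDeriv 3 α) (iteratedDeriv 4 α l) l := fun l => HA 3 l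
  have HB3 : ∀ l, HasDerivAt (iteratedDeriv 3 β) (iteratedDeriv 4 β l) l := fun l => HB 3 l
  have d1 : deriv (fun l => m0*(α l*α l) + 2*m1*(α l*β l) + m3*(β l*β l) + 2*m2*α l + 2*m4*β l + m5) = (fun l => 2*m0*(α l*iteratedDeriv 1 α l) + 2*m1*(iteratedDeriv 1 α l*β l + α l*iteratedDeriv 1 β l) + 2*m3*(β l*iteratedDeriv 1 β l) + 2*m2*iteratedDeriv 1 α l + 2*m4*iteratedDeriv 1 β l) := by
    funext l
    exact ((((((((HA0 l).mul (HA0 l)).const_mul m0).add (((HA0 l).mul (HB0 l)).const_mul (2*m1))).add (((HB0 l).mul (HB0 l)).const_mul m3)).add ((HA0 l).const_mul (2*m2))).add ((HB0 l).const_mul (2*m4))).add_const m5).deriv.trans (by ring)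
  have d2 : deriv (fun l => 2*m0*(α l*iteratedDeriv 1 α l) + 2*m1*(iteratedDeriv 1 α l*β l + α l*iteratedDeriv 1 β l) + 2*m3*(β l*iteratedDeriv 1 β l) + 2*m2*iteratedDeriv 1 α l + 2*m4*iteratedDeriv 1 β l) = (fun l => 2*m0*(iteratedDeriv 1 α l*iteratedDeriv 1 α l + α l*iteratedDeriv 2 α l) + 2*m1*(iteratedDeriv 2 α l*β l + 2*(iteratedDeriv 1 α l*iteratedDeriv 1 β l) + α l*iteratedDeriv 2 β l) + 2*m3*(iteratedDeriv 1 β l*iteratedDeriv 1 β l + β l*iteratedDeriv 2 β l) + 2*m2*iteratedDeriv 2 α l + 2*m4*iteratedDeriv 2 β l) := by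
    funext l
    exact (((((((HA0 l).mul (HA1 l)).const_mul (2*m0)).add ((((HA1 l).mul (HB0 l)).add ((HA0 l).mul (HB1 l))).const_mul (2*m1))).add (((HB0 l).mul (HB1 l)).const_mul (2*m3))).add ((HA1 l).const_mul (2*m2))).add ((HB1 l).const_mul (2*m4))).deriv.trans (by ring)
  have d3 : deriv (fun l => 2*m0*(iteratedDeriv 1 α l*iteratedDeriv 1 α l + α l*iteratedDeriv 2 α l) + 2*m1*(iteratedDeriv 2 α l*β l + 2*(iteratedDeriv 1 α l*iteratedDeriv 1 β l) + α l*iteratedDeriv 2 β l) + 2*m3*(iteratedDeriv 1 β l*iteratedDeriv 1 β l + β l*iteratedDeriv 2 β l) + 2*m2*iteratedDeriv 2 α l + 2*m4*iteratedDeriv 2 β l) = (fun l => 2*m0*(3*(iteratedDeriv 1 α l*iteratedDeriv 2 α l) + α l*iteratedDeriv 3 α l) + 2*m1*(iteratedDeriv 3 α l*β l + 3*(iteratedDeriv 2 α l*iteratedDeriv 1 β l) + 3*(iteratedDeriv 1 α l*iteratedDeriv 2 β l) + α l*iteratedDeriv 3 β l) + 2*m3*(3*(iteratedDeriv 1 β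 l*iteratedDeriv 2 β l) + β l*iteratedDeriv 3 β l) + 2*m2*iteratedDeriv 3 α l + 2*m4*iteratedDeriv 3 β l) := by
    funext l
    exact ((((((((HA1 l).mul (HA1 l)).add ((HA0 l).mul (HA2 l))).const_mul (2*m0)).add (((((HA2 l).mul (HB0 l)).add (((HA1 l).mul (HB1 l)).const_mul 2)).add ((HA0 l).mul (HB2 l))).const_mul (2*m1))).add ((((HB1 l).mul (HB1 l)).add ((HB0 l).mul (HB2 l))).const_mul (2*m3))).add ((HA2 l).const_mul (2*m2))).add ((HB2 l).const_mul (2*m4))).deriv.trans (by ring)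
  have d4 : deriv (fun l => 2*m0*(3*(iteratedDeriv 1 α l*iteratedDeriv 2 α l) + α l*iteratedDeriv 3 α l) + 2*m1*(iteratedDeriv 3 α l*β l + 3*(iteratedDeriv 2 α l*iteratedDeriv 1 β l) + 3*(iteratedDeriv 1 α l*iteratedDeriv 2 β l) + α l*iteratedDeriv 3 β l) + 2*m3*(3*(iteratedDeriv 1 β l*iteratedDeriv 2 β l) + β l*iteratedDeriv 3 β l) + 2*m2*iteratedDeriv 3 α l + 2*m4*iteratedDeriv 3 β l) = (fun l => 2*m0*(3*(iteratedDeriv 2 α l*iteratedDeriv 2 α l) + 4*(iteratedDeriv 1 α l*iteratedDeriv 3 α l) + α l*iteratedDeriv 4 α l) + 2*m1*(iteratedDeriv 4 α l*β l + 4*(iteratedDeriv 3 α l*iteratedDeriv 1 β l) + 6*(iteratedDeriv 2 α l*iteratedDeriv 2 β l) + 4*(iteratedDeriv 1 α l*iteratedDeriv 3 β l) + α l*iteratedDeriv 4 β l) + 2*m3*(3*(iteratedDeriv 2 β l*iteratedDeriv 2 β l) + 4*(iteratedDeriv 1 β l*iteratedDeriv 3 β l) + β l*iteratedDeriv 4 β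 l) + 2*m2*iteratedDeriv 4 α l + 2*m4*iteratedDeriv 4 β l) := by
    funext l
    exact (((((((((HA1 l).mul (HA2 l)).const_mul 3).add ((HA0 l).mul (HA3 l))).const_mul (2*m0)).add ((((((HA3 l).mul (HB0 l)).add (((HA2 l).mul (HB1 l)).const_mul 3)).add (((HA1 l).mul (HB2 l)).const_mul 3)).add ((HA0 l).mul (HB3 l))).const_mul (2*m1))).add (((((HB1 l).mul (HB2 l)).const_mul 3).add ((HB0 l).mul (HB3 l))).const_mul (2*m3))).add ((HA3 l).const_mul (2*m2))).add ((HB3 l).const_mul (2*m4))).deriv.trans (by ring)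
  have k0 := h 0 (by norm_num)
  have k1 := h 1 (by norm_num)
  have k2 := h 2 (by norm_num)
  have k3 := h 3 (by norm_num)
  have k4 := h 4 (by norm_num)
  rw [iteratedDeriv_zero] at k0
  rw [iteratedDeriv_one, d1] at k1
  rw [show (2:ℕ) = 1+1 from rfl, iteratedDeriv_succ', d1, iteratedDeriv_one, d2] at k2
  rw [show (3:ℕ) = 2+1 from rfl, iteratedDeriv_succ', d1, show (2:ℕ) = 1+1 from rfl,
    iteratedDeriv_succ', d2, iteratedDeriv_one, d3] at k3
  rw [show (4:ℕ) = 3+1 from rfl, iteratedDeriv_succ', d1, show (3:ℕ) = 2+1 from rfl,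
    iteratedDeriv_succ', d2, show (2:ℕ) = 1+1 from rfl, iteratedDeriv_succ', d3,
    iteratedDeriv_one, d4] at k4
  exact ⟨k0, k1, k2, k3, k4⟩

/-- Uniqueness of the conic through a nondegenerate curve of covectors (3D case of
Proposition prp-e): let `θ(λ) = (α(λ), β(λ), 1)` with `α'β'' − α''β' ≠ 0` at `l₀`.
The 5 linear conditions on a symmetric `3×3` matrix `M` (6 coefficients) obtained by
requiring `θ(λ)ᵀ M θ(λ) = 0` together with its first four `λ`-derivatives to vanish at
`l₀` have an at most 1-dimensional solution space: any two symmetric solutions `M₁`, `M₂`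
are linearly dependent. -/
theorem stmt17 (α β : ℝ → ℝ) (hα : ContDiff ℝ (⊤ : ℕ∞) α) (hβ : ContDiff ℝ (⊤ : ℕ∞) β) (l₀ : ℝ)
    (hnd : deriv α l₀ * deriv (deriv β) l₀ - deriv (deriv α) l₀ * deriv β l₀ ≠ 0)
    (θ : ℝ → (Fin 3 → ℝ)) (hθ : ∀ l, θ l = ![α l, β l, 1])
    (M₁ M₂ : Matrix (Fin 3) (Fin 3) ℝ) (hs₁ : M₁ᵀ = M₁) (hs₂ : M₂ᵀ = M₂)
    (h₁ : ∀ k ≤ 4, iteratedDeriv k (fun l => θ l ⬝ᵥ M₁.mulVec (θ l)) l₀ = 0)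
    (h₂ : ∀ k ≤ 4, iteratedDeriv k (fun l => θ l ⬝ᵥ M₂.mulVec (θ l)) l₀ = 0) :
    ∃ a b : ℝ, ¬(a = 0 ∧ b = 0) ∧ a • M₁ + b • M₂ = 0 := by
  have q10 : M₁ 1 0 = M₁ 0 1 := congrFun (congrFun hs₁ 0) 1
  have q20 : M₁ 2 0 = M₁ 0 2 := congrFun (congrFun hs₁ 0) 2
  have q21 : M₁ 2 1 = M₁ 1 2 := congrFun (congrFun hs₁ 1) 2
  have r10 : M₂ 1 0 = M₂ 0 1 := congrFun (congrFun hs₂ 0) 1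
  have r20 : M₂ 2 0 = M₂ 0 2 := congrFun (congrFun hs₂ 0) 2
  have r21 : M₂ 2 1 = M₂ 1 2 := congrFun (congrFun hs₂ 1) 2
  have hf₁ : (fun l => θ l ⬝ᵥ M₁.mulVec (θ l))
      = (fun l => M₁ 0 0*(α l*α l) + 2*(M₁ 0 1)*(α l*β l) + (M₁ 1 1)*(β l*β l)
          + 2*(M₁ 0 2)*α l + 2*(M₁ 1 2)*β l + M₁ 2 2) := by
    funext l
    rw [hθ l]
    simp [dotProduct, Matrix.mulVec, Fin.sum_univ_three]
    rw [q10, q20, q21]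
    ring
  have hf₂ : (fun l => θ l ⬝ᵥ M₂.mulVec (θ l))
      = (fun l => M₂ 0 0*(α l*α l) + 2*(M₂ 0 1)*(α l*β l) + (M₂ 1 1)*(β l*β l)
          + 2*(M₂ 0 2)*α l + 2*(M₂ 1 2)*β l + M₂ 2 2) := by
    funext l
    rw [hθ l]
    simp [dotProduct, Matrix.mulVec, Fin.sum_univ_three]
    rw [r10, r20, r21]
    ring
  rw [hf₁] at h₁
  rw [hf₂] at h₂
  obtain ⟨E01, E11, E21, E31, E41⟩ := derivs17 α β hα hβ (M₁ 0 0) (M₁ 0 1) (M₁ 0 2) (M₁ 1 1) (M₁ 1 2) (M₁ 2 2) l₀ h₁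
  obtain ⟨E02, E12, E22, E32, E42⟩ := derivs17 α β hα hβ (M₂ 0 0) (M₂ 0 1) (M₂ 0 2) (M₂ 1 1) (M₂ 1 2) (M₂ 2 2) l₀ h₂
  set A0 := α l₀ with hA0
  set A1 := iteratedDeriv 1 α l₀ with hA1
  set A2 := iteratedDeriv 2 α l₀ with hA2
  set A3 := iteratedDeriv 3 α l₀ with hA3
  set A4 := iteratedDeriv 4 α l₀ with hA4
  set B0 := β l₀ with hB0
  set B1 := iteratedDeriv 1 β l₀ with hB1
  set B2 := iteratedDeriv 2 β l₀ with hB2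
  set B3 := iteratedDeriv 3 β l₀ with hB3
  set B4 := iteratedDeriv 4 β l₀ with hB4
  have hD : A1*B2 - A2*B1 ≠ 0 := by
    have e1a : A1 = deriv α l₀ := by rw [hA1, iteratedDeriv_one]
    have e1b : B1 = deriv β l₀ := by rw [hB1, iteratedDeriv_one]
    have e2a : A2 = deriv (deriv α) l₀ := by
      rw [hA2, show (2:ℕ) = 1+1 from rfl, iteratedDeriv_succ, iteratedDeriv_one]
    have e2b : B2 = deriv (deriv β) l₀ := by
      rw [hB2, show (2:ℕ) = 1+1 from rfl, iteratedDeriv_succ, iteratedDeriv_one]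
    rw [e1a, e1b, e2a, e2b]
    exact hnd
  have h9D : (9:ℝ)*(A1*B2-A2*B1)^4 ≠ 0 := mul_ne_zero (by norm_num) (pow_ne_zero 4 hD)
  obtain ⟨K10, K11, K12, K13, K14, K15⟩ :=
    alg17 A0 A1 A2 A3 A4 B0 B1 B2 B3 B4 (M₁ 0 0) (M₁ 0 1) (M₁ 0 2) (M₁ 1 1) (M₁ 1 2) (M₁ 2 2)
      (by linear_combination E01) (by linear_combination E11) (by linear_combination E21)
      (by linear_combination E31) (by linear_combination E41)
  obtain ⟨K20, K21, K22, K23, K24, K25⟩ :=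
    alg17 A0 A1 A2 A3 A4 B0 B1 B2 B3 B4 (M₂ 0 0) (M₂ 0 1) (M₂ 0 2) (M₂ 1 1) (M₂ 1 2) (M₂ 2 2)
      (by linear_combination E02) (by linear_combination E12) (by linear_combination E22)
      (by linear_combination E32) (by linear_combination E42)
  set c₁ : ℝ := M₁ 0 0*A1^2 + 2*(M₁ 0 1)*A1*B1 + M₁ 1 1*B1^2 with hc₁
  set c₂ : ℝ := M₂ 0 0*A1^2 + 2*(M₂ 0 1)*A1*B1 + M₂ 1 1*B1^2 with hc₂
  by_cases hc : c₁ = 0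
  · refine ⟨1, 0, by norm_num, ?_⟩
    have zm0 : M₁ 0 0 = 0 := by
      have hk := K10
      rw [hc, zero_mul] at hk
      exact (mul_eq_zero.mp hk).resolve_left h9D
    have zm1 : M₁ 0 1 = 0 := by
      have hk := K11
      rw [hc, zero_mul] at hk
      exact (mul_eq_zero.mp hk).resolve_left h9D
    have zm2 : M₁ 0 2 = 0 := by
      have hk := K12
      rw [hc, zero_mul] at hk
      exact (mul_eq_zero.mp hk).resolve_left h9D
    have zm3 : M₁ 1 1 = 0 := by
      have hk := K13
      rw [hc, zero_mul] at hk
      exact (mul_eq_zero.mp hk).resolve_left h9D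
    have zm4 : M₁ 1 2 = 0 := by
      have hk := K14
      rw [hc, zero_mul] at hk
      exact (mul_eq_zero.mp hk).resolve_left h9D
    have zm5 : M₁ 2 2 = 0 := by
      have hk := K15
      rw [hc, zero_mul] at hk
      exact (mul_eq_zero.mp hk).resolve_left h9D
    ext i j
    fin_cases i <;> fin_cases j <;>
      simp only [Matrix.add_apply, Matrix.smul_apply, smul_eq_mul, Matrix.zero_apply,
        one_mul, zero_mul, add_zero]
    · exact zm0
    · exact zm1
    · exact zm2
    · show M₁ 1 0 = 0; rw [q10]; exact zm1
    · exact zm3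
    · exact zm4
    · show M₁ 2 0 = 0; rw [q20]; exact zm2
    · show M₁ 2 1 = 0; rw [q21]; exact zm4
    · exact zm5
  · refine ⟨c₂, -c₁, by rintro ⟨-, h2⟩; exact hc (neg_eq_zero.mp h2), ?_⟩
    have wm0 : c₂ * M₁ 0 0 + -c₁ * M₂ 0 0 = 0 := by
      have hk : 9*(A1*B2-A2*B1)^4 * (c₂ * M₁ 0 0 + -c₁ * M₂ 0 0) = 0 := by
        linear_combination c₂ * K10 - c₁ * K20
      exact (mul_eq_zero.mp hk).resolve_left h9D
    have wm1 : c₂ * M₁ 0 1 + -c₁ * M₂ 0 1 = 0 := by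
      have hk : 9*(A1*B2-A2*B1)^4 * (c₂ * M₁ 0 1 + -c₁ * M₂ 0 1) = 0 := by
        linear_combination c₂ * K11 - c₁ * K21
      exact (mul_eq_zero.mp hk).resolve_left h9D
    have wm2 : c₂ * M₁ 0 2 + -c₁ * M₂ 0 2 = 0 := by
      have hk : 9*(A1*B2-A2*B1)^4 * (c₂ * M₁ 0 2 + -c₁ * M₂ 0 2) = 0 := by
        linear_combination c₂ * K12 - c₁ * K22
      exact (mul_eq_zero.mp hk).resolve_left h9D
    have wm3 : c₂ * M₁ 1 1 + -c₁ * M₂ 1 1 = 0 := by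
      have hk : 9*(A1*B2-A2*B1)^4 * (c₂ * M₁ 1 1 + -c₁ * M₂ 1 1) = 0 := by
        linear_combination c₂ * K13 - c₁ * K23
      exact (mul_eq_zero.mp hk).resolve_left h9D
    have wm4 : c₂ * M₁ 1 2 + -c₁ * M₂ 1 2 = 0 := by
      have hk : 9*(A1*B2-A2*B1)^4 * (c₂ * M₁ 1 2 + -c₁ * M₂ 1 2) = 0 := by
        linear_combination c₂ * K14 - c₁ * K24
      exact (mul_eq_zero.mp hk).resolve_left h9D
    have wm5 : c₂ * M₁ 2 2 + -c₁ * M₂ 2 2 = 0 := by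
      have hk : 9*(A1*B2-A2*B1)^4 * (c₂ * M₁ 2 2 + -c₁ * M₂ 2 2) = 0 := by
        linear_combination c₂ * K15 - c₁ * K25
      exact (mul_eq_zero.mp hk).resolve_left h9D
    ext i j
    fin_cases i <;> fin_cases j <;>
      simp only [Matrix.add_apply, Matrix.smul_apply, smul_eq_mul, Matrix.zero_apply]
    · exact wm0
    · exact wm1
    · exact wm2
    · show c₂ * M₁ 1 0 + -c₁ * M₂ 1 0 = 0; rw [q10, r10]; exact wm1
    · exact wm3
    · exact wm4
    · show c₂ * M₁ 2 0 + -c₁ * M₂ 2 0 = 0; rw [q20, r20]; exact wm2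
    · show c₂ * M₁ 2 1 + -c₁ * M₂ 2 1 = 0; rw [q21, r21]; exact wm4
    · exact wm5
end
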